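/- arXiv:2506.10852 — 6 statements merged into one kernel-verified Lean document; each statement's English description precedes it below -/
import Mathlib

section
/- The set G^k of k×k matrices a over ℝ≥0 with zero diagonal such that a_{ij} > 0 and a_{jl} > 0 imply a_{ij} + a_{jl} ≤ a_{il}, is a closed subset of ℝ^{k×k}. -/
/-- The set `G^k` of `k × k` real matrices with zero diagonal and nonnegative
entries such that `a i j > 0` and `a j l > 0` imply `a i j + a j l ≤ a i l`. -/
def Gmat (k : ℕ) : Set (Matrix (Fin k) (Fin k) ℝ) :=
  {a | (∀ i, a i i = 0) ∧ (∀ i j, 0 ≤ a i j) ∧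
    ∀ i j l, 0 < a i j → 0 < a j l → a i j + a j l ≤ a i l}

/-- `G^k` is a closed subset of `ℝ^{k×k}`. -/
theorem Gmat_isClosed (k : ℕ) : IsClosed (Gmat k) := by
  have hc : ∀ i j : Fin k, Continuous fun a : Matrix (Fin k) (Fin k) ℝ => a i j :=
    fun i j => (continuous_apply j).comp (continuous_apply i)
  have heq : Gmat k =
      (⋂ i, {a : Matrix (Fin k) (Fin k) ℝ | a i i = 0}) ∩
      ((⋂ i, ⋂ j, {a : Matrix (Fin k) (Fin k) ℝ | 0 ≤ a i j}) ∩
       (⋂ i, ⋂ j, ⋂ l, {a : Matrix (Fin k) (Fin k) ℝ |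
          0 < a i j → 0 < a j l → a i j + a j l ≤ a i l})) := by
    ext a
    simp [Gmat, Set.mem_iInter]
  rw [heq]
  refine IsClosed.inter (isClosed_iInter fun i => ?_)
    (IsClosed.inter (isClosed_iInter fun i => isClosed_iInter fun j => ?_)
      (isClosed_iInter fun i => isClosed_iInter fun j => isClosed_iInter fun l => ?_))
  · exact isClosed_eq (hc i i) continuous_const
  · exact isClosed_le continuous_const (hc i j)
  · have : {a : Matrix (Fin k) (Fin k) ℝ |
        0 < a i j → 0 < a j l → a i j + a j l ≤ a i l} =
        {a | 0 < a i j}ᶜ ∪ ({a | 0 < a j l}ᶜ ∪ {a | a i j + a j l ≤ a i l}) := by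
      ext a
      simp [Set.mem_setOf_eq, or_iff_not_imp_left]
    rw [this]
    exact ((isOpen_lt continuous_const (hc i j)).isClosed_compl).union
      (((isOpen_lt continuous_const (hc j l)).isClosed_compl).union
        (isClosed_le ((hc i j).add (hc j l)) (hc i l)))
end

section
/- Disjoint union: Let (M, τ) and (M', τ') be bounded Lorentzian metric spaces with spacelike boundaries i⁰ and i'⁰. Define M̂ as the disjoint union of M and M' with i⁰ and i'⁰ identified, and τ̂ equal to τ on M×M, to τ' on M'×M', and 0 otherwise. Then (M̂, τ̂) is a bounded Lorentzian metric space, and its distinction metric restricts to the distinction metric of M on M×M and of M' on M'×M'. -/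
/-- The distinction (Noldus) metric induced by a time separation function. -/
noncomputable def nDist {M : Type*} (tau : M → M → ℝ) (x y : M) : ℝ :=
  max (⨆ z, |tau x z - tau y z|) (⨆ z, |tau z x - tau z y|)

/-- The setoid on `M ⊕ M'` identifying the two spacelike boundaries `i0` and `i0'`. -/
def glueSetoid (M M' : Type*) (i0 : M) (i0' : M') : Setoid (Sum M M') where
  r a b := a = b ∨ (a = Sum.inl i0 ∧ b = Sum.inr i0') ∨ (a = Sum.inr i0' ∧ b = Sum.inl i0)
  iseqv := by
    constructor
    · intro a; exact Or.inl rfl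
    · intro a b h
      rcases h with h | h | h
      · exact Or.inl h.symm
      · exact Or.inr (Or.inr ⟨h.2, h.1⟩)
      · exact Or.inr (Or.inl ⟨h.2, h.1⟩)
    · intro a b c hab hbc
      rcases hab with rfl | ⟨ha, hb⟩ | ⟨ha, hb⟩
      · exact hbc
      · rcases hbc with rfl | ⟨hb', hc⟩ | ⟨hb', hc⟩
        · exact Or.inr (Or.inl ⟨ha, hb⟩)
        · exact absurd (hb ▸ hb') (by simp)
        · exact Or.inl (ha.trans hc.symm)
      · rcases hbc with rfl | ⟨hb', hc⟩ | ⟨hb', hc⟩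
        · exact Or.inr (Or.inr ⟨ha, hb⟩)
        · exact Or.inl (ha.trans hc.symm)
        · exact absurd (hb ▸ hb') (by simp)

set_option linter.unusedSectionVars false

namespace GlueAux

variable {M M' : Type*}

/-- The sum-level time separation function. -/
def tauSum (tau : M → M → ℝ) (tau' : M' → M' → ℝ) : Sum M M' → Sum M M' → ℝ
  | .inl x, .inl y => tau x y
  | .inr x, .inr y => tau' x y
  | _, _ => 0

variable (tau : M → M → ℝ) (tau' : M' → M' → ℝ) (i0 : M) (i0' : M')

theorem tauSum_bdry_left (hi0 : ∀ x, tau i0 x = 0 ∧ tau x i0 = 0)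
    (hi0' : ∀ x, tau' i0' x = 0 ∧ tau' x i0' = 0) (b : Sum M M') :
    tauSum tau tau' (Sum.inl i0) b = 0 ∧ tauSum tau tau' (Sum.inr i0') b = 0 := by
  cases b with
  | inl y => exact ⟨(hi0 y).1, rfl⟩
  | inr y => exact ⟨rfl, (hi0' y).1⟩

theorem tauSum_bdry_right (hi0 : ∀ x, tau i0 x = 0 ∧ tau x i0 = 0)
    (hi0' : ∀ x, tau' i0' x = 0 ∧ tau' x i0' = 0) (a : Sum M M') :
    tauSum tau tau' a (Sum.inl i0) = 0 ∧ tauSum tau tau' a (Sum.inr i0') = 0 := by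
  cases a with
  | inl y => exact ⟨(hi0 y).2, rfl⟩
  | inr y => exact ⟨rfl, (hi0' y).2⟩

theorem tauSum_resp (hi0 : ∀ x, tau i0 x = 0 ∧ tau x i0 = 0)
    (hi0' : ∀ x, tau' i0' x = 0 ∧ tau' x i0' = 0) :
    ∀ (a b a' b' : Sum M M'), (glueSetoid M M' i0 i0').r a a' →
      (glueSetoid M M' i0 i0').r b b' → tauSum tau tau' a b = tauSum tau tau' a' b' := by
  intro a b a' b' ha hb
  rcases ha with rfl | ⟨h1, h2⟩ | ⟨h1, h2⟩
  · rcases hb with rfl | ⟨g1, g2⟩ | ⟨g1, g2⟩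
    · rfl
    · subst g1; subst g2
      rw [(tauSum_bdry_right tau tau' i0 i0' hi0 hi0' a).1,
          (tauSum_bdry_right tau tau' i0 i0' hi0 hi0' a).2]
    · subst g1; subst g2
      rw [(tauSum_bdry_right tau tau' i0 i0' hi0 hi0' a).1,
          (tauSum_bdry_right tau tau' i0 i0' hi0 hi0' a).2]
  · subst h1; subst h2
    rcases hb with rfl | ⟨g1, g2⟩ | ⟨g1, g2⟩ <;>
      simp_all [(tauSum_bdry_left tau tau' i0 i0' hi0 hi0' _).1,
        (tauSum_bdry_left tau tau' i0 i0' hi0 hi0' _).2]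
  · subst h1; subst h2
    rcases hb with rfl | ⟨g1, g2⟩ | ⟨g1, g2⟩ <;>
      simp_all [(tauSum_bdry_left tau tau' i0 i0' hi0 hi0' _).1,
        (tauSum_bdry_left tau tau' i0 i0' hi0 hi0' _).2]

/-- The glued time separation function on the quotient. -/
def tauHat (hi0 : ∀ x, tau i0 x = 0 ∧ tau x i0 = 0)
    (hi0' : ∀ x, tau' i0' x = 0 ∧ tau' x i0' = 0) :
    Quotient (glueSetoid M M' i0 i0') → Quotient (glueSetoid M M' i0 i0') → ℝ :=
  Quotient.lift₂ (tauSum tau tau') (tauSum_resp tau tau' i0 i0' hi0 hi0')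

/-- The saturated image of a pair of open sets. -/
def QU (A : Set M) (A' : Set M') : Set (Quotient (glueSetoid M M' i0 i0')) :=
  Quotient.mk _ '' (Sum.inl '' A ∪ Sum.inr '' A')

theorem QU_preimage {A : Set M} {A' : Set M'} (hsat : i0 ∈ A ↔ i0' ∈ A') :
    Quotient.mk (glueSetoid M M' i0 i0') ⁻¹' QU i0 i0' A A' =
      Sum.inl '' A ∪ Sum.inr '' A' := by
  ext w
  simp only [Set.mem_preimage, QU, Set.mem_image, Set.mem_union]
  constructor
  · rintro ⟨v, hv, hq⟩
    have hr := Quotient.exact hq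
    rcases hr with rfl | ⟨hv1, hv2⟩ | ⟨hv1, hv2⟩
    · exact hv
    · subst hv1; subst hv2
      rcases hv with ⟨x, hx, hx'⟩ | ⟨x, hx, hx'⟩
      · cases hx'
        exact Or.inr ⟨i0', hsat.mp hx, rfl⟩
      · cases hx'
    · subst hv1; subst hv2
      rcases hv with ⟨x, hx, hx'⟩ | ⟨x, hx, hx'⟩
      · cases hx'
      · cases hx'
        exact Or.inl ⟨i0, hsat.mpr hx, rfl⟩
  · intro hw
    exact ⟨w, hw, rfl⟩

theorem mem_QU_inl {A : Set M} {A' : Set M'} (hsat : i0 ∈ A ↔ i0' ∈ A') (x : M) :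
    Quotient.mk (glueSetoid M M' i0 i0') (Sum.inl x) ∈ QU i0 i0' A A' ↔ x ∈ A := by
  have h := QU_preimage i0 i0' hsat (A := A) (A' := A')
  constructor
  · intro hm
    have : Sum.inl x ∈ Sum.inl '' A ∪ Sum.inr '' A' := h ▸ hm
    rcases this with ⟨y, hy, hy'⟩ | ⟨y, hy, hy'⟩
    · cases hy'; exact hy
    · cases hy'
  · intro hm
    exact ⟨Sum.inl x, Or.inl ⟨x, hm, rfl⟩, rfl⟩

theorem mem_QU_inr {A : Set M} {A' : Set M'} (hsat : i0 ∈ A ↔ i0' ∈ A') (x : M') :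
    Quotient.mk (glueSetoid M M' i0 i0') (Sum.inr x) ∈ QU i0 i0' A A' ↔ x ∈ A' := by
  have h := QU_preimage i0 i0' hsat (A := A) (A' := A')
  constructor
  · intro hm
    have : Sum.inr x ∈ Sum.inl '' A ∪ Sum.inr '' A' := h ▸ hm
    rcases this with ⟨y, hy, hy'⟩ | ⟨y, hy, hy'⟩
    · cases hy'
    · cases hy'; exact hy
  · intro hm
    exact ⟨Sum.inr x, Or.inr ⟨x, hm, rfl⟩, rfl⟩

theorem isOpen_QU [t : TopologicalSpace M] [t' : TopologicalSpace M']
    {A : Set M} {A' : Set M'} (hA : IsOpen A) (hA' : IsOpen A')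
    (hsat : i0 ∈ A ↔ i0' ∈ A') : IsOpen (QU i0 i0' A A') := by
  rw [← isQuotientMap_quotient_mk'.isOpen_preimage]
  show IsOpen (Quotient.mk (glueSetoid M M' i0 i0') ⁻¹' QU i0 i0' A A')
  rw [QU_preimage i0 i0' hsat, isOpen_sum_iff]
  constructor
  · have h : Sum.inl ⁻¹' (Sum.inl '' A ∪ Sum.inr '' A' : Set (Sum M M')) = A := by
      ext x; simp
    rw [h]; exact hA
  · have h : Sum.inr ⁻¹' (Sum.inl '' A ∪ Sum.inr '' A' : Set (Sum M M')) = A' := by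
      ext x; simp
    rw [h]; exact hA'

section Top

variable [t : TopologicalSpace M] [t' : TopologicalSpace M']
variable (hi0 : ∀ x, tau i0 x = 0 ∧ tau x i0 = 0)
variable (hi0' : ∀ x, tau' i0' x = 0 ∧ tau' x i0' = 0)

theorem tauHat_nonneg (h_nonneg : ∀ x y, 0 ≤ tau x y) (h_nonneg' : ∀ x y, 0 ≤ tau' x y) :
    ∀ p q, 0 ≤ tauHat tau tau' i0 i0' hi0 hi0' p q := by
  intro p q
  obtain ⟨a, rfl⟩ := p.exists_rep
  obtain ⟨b, rfl⟩ := q.exists_rep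
  cases a <;> cases b <;>
    first
      | exact h_nonneg _ _
      | exact h_nonneg' _ _
      | exact le_refl (0 : ℝ)

theorem ite_sat {α : Type*} {c : Prop} [Decidable c] {s : Set α} {x : α} (h : x ∈ s) :
    c ↔ x ∈ (if c then s else ∅) := by
  by_cases hc : c <;> simp [hc, h]

theorem mem_ite_elim {α : Type*} {c : Prop} [Decidable c] {s : Set α} {x : α}
    (h : x ∈ (if c then s else ∅)) : c ∧ x ∈ s := by
  by_cases hc : c <;> simp_all

theorem isOpen_ite' {α : Type*} [TopologicalSpace α] {c : Prop} [Decidable c] {s : Set α}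
    (hs : IsOpen s) : IsOpen (if c then s else ∅) := by
  split
  · exact hs
  · exact isOpen_empty

theorem isOpen_sublevel (hc : Continuous fun p : M × M => tau p.1 p.2)
    (hc' : Continuous fun p : M' × M' => tau' p.1 p.2) (r : ℝ) (hr : 0 < r) :
    IsOpen {p : Quotient (glueSetoid M M' i0 i0') × Quotient (glueSetoid M M' i0 i0') |
      tauHat tau tau' i0 i0' hi0 hi0' p.1 p.2 < r} := by
  classical
  have hO : IsOpen {p : M × M | tau p.1 p.2 < r} := isOpen_Iio.preimage hc
  have hO' : IsOpen {p : M' × M' | tau' p.1 p.2 < r} := isOpen_Iio.preimage hc'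
  rw [isOpen_prod_iff] at hO hO' ⊢
  intro p q hpq
  obtain ⟨a, rfl⟩ := p.exists_rep
  obtain ⟨b, rfl⟩ := q.exists_rep
  cases a with
  | inl x =>
    cases b with
    | inl y =>
      have hxy : tau x y < r := hpq
      obtain ⟨A, B, hAo, hBo, hxA, hyB, hAB⟩ := hO x y hxy
      obtain ⟨A₀, B₀, hA₀o, hB₀o, hiA₀, hiB₀, hAB₀⟩ :=
        hO' i0' i0' (show tau' i0' i0' < r by rw [(hi0' i0').1]; exact hr)
      have sat1 : i0 ∈ A ↔ i0' ∈ (if i0 ∈ A then A₀ else ∅) := ite_sat hiA₀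
      have sat2 : i0 ∈ B ↔ i0' ∈ (if i0 ∈ B then B₀ else ∅) := ite_sat hiB₀
      refine ⟨QU i0 i0' A (if i0 ∈ A then A₀ else ∅),
        QU i0 i0' B (if i0 ∈ B then B₀ else ∅),
        isOpen_QU i0 i0' hAo (isOpen_ite' hA₀o) sat1,
        isOpen_QU i0 i0' hBo (isOpen_ite' hB₀o) sat2,
        (mem_QU_inl i0 i0' sat1 x).mpr hxA,
        (mem_QU_inl i0 i0' sat2 y).mpr hyB, ?_⟩
      rintro ⟨p', q'⟩ ⟨hp', hq'⟩
      obtain ⟨a', rfl⟩ := p'.exists_rep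
      obtain ⟨b', rfl⟩ := q'.exists_rep
      cases a' with
      | inl u =>
        cases b' with
        | inl v =>
          have hu := (mem_QU_inl i0 i0' sat1 u).mp hp'
          have hv := (mem_QU_inl i0 i0' sat2 v).mp hq'
          exact hAB (Set.mk_mem_prod hu hv)
        | inr v' => exact hr
      | inr u' =>
        cases b' with
        | inl v => exact hr
        | inr v' =>
          have hu := mem_ite_elim ((mem_QU_inr i0 i0' sat1 u').mp hp')
          have hv := mem_ite_elim ((mem_QU_inr i0 i0' sat2 v').mp hq')
          exact hAB₀ (Set.mk_mem_prod hu.2 hv.2)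
    | inr y' =>
      obtain ⟨A, B₁, hAo, hB₁o, hxA, hiB₁, hAB₁⟩ :=
        hO x i0 (show tau x i0 < r by rw [(hi0 x).2]; exact hr)
      obtain ⟨A₁', B', hA₁'o, hB'o, hiA₁', hyB', hA₁B'⟩ :=
        hO' i0' y' (show tau' i0' y' < r by rw [(hi0' y').1]; exact hr)
      have sat1 : i0 ∈ A ↔ i0' ∈ (if i0 ∈ A then A₁' else ∅) := ite_sat hiA₁'
      have sat2 : i0 ∈ (if i0' ∈ B' then B₁ else ∅) ↔ i0' ∈ B' := (ite_sat hiB₁).symm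
      refine ⟨QU i0 i0' A (if i0 ∈ A then A₁' else ∅),
        QU i0 i0' (if i0' ∈ B' then B₁ else ∅) B',
        isOpen_QU i0 i0' hAo (isOpen_ite' hA₁'o) sat1,
        isOpen_QU i0 i0' (isOpen_ite' hB₁o) hB'o sat2,
        (mem_QU_inl i0 i0' sat1 x).mpr hxA,
        (mem_QU_inr i0 i0' sat2 y').mpr hyB', ?_⟩
      rintro ⟨p', q'⟩ ⟨hp', hq'⟩
      obtain ⟨a', rfl⟩ := p'.exists_rep
      obtain ⟨b', rfl⟩ := q'.exists_rep
      cases a' with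
      | inl u =>
        cases b' with
        | inl v =>
          have hu := (mem_QU_inl i0 i0' sat1 u).mp hp'
          have hv := mem_ite_elim ((mem_QU_inl i0 i0' sat2 v).mp hq')
          exact hAB₁ (Set.mk_mem_prod hu hv.2)
        | inr v' => exact hr
      | inr u' =>
        cases b' with
        | inl v => exact hr
        | inr v' =>
          have hu := mem_ite_elim ((mem_QU_inr i0 i0' sat1 u').mp hp')
          have hv := (mem_QU_inr i0 i0' sat2 v').mp hq'
          exact hA₁B' (Set.mk_mem_prod hu.2 hv)
  | inr x' =>
    cases b with
    | inl y =>
      obtain ⟨A', B₁', hA'o, hB₁'o, hxA', hiB₁', hAB₁'⟩ :=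
        hO' x' i0' (show tau' x' i0' < r by rw [(hi0' x').2]; exact hr)
      obtain ⟨A₁, B, hA₁o, hBo, hiA₁, hyB, hA₁B⟩ :=
        hO i0 y (show tau i0 y < r by rw [(hi0 y).1]; exact hr)
      have sat1 : i0 ∈ (if i0' ∈ A' then A₁ else ∅) ↔ i0' ∈ A' := (ite_sat hiA₁).symm
      have sat2 : i0 ∈ B ↔ i0' ∈ (if i0 ∈ B then B₁' else ∅) := ite_sat hiB₁'
      refine ⟨QU i0 i0' (if i0' ∈ A' then A₁ else ∅) A',
        QU i0 i0' B (if i0 ∈ B then B₁' else ∅),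
        isOpen_QU i0 i0' (isOpen_ite' hA₁o) hA'o sat1,
        isOpen_QU i0 i0' hBo (isOpen_ite' hB₁'o) sat2,
        (mem_QU_inr i0 i0' sat1 x').mpr hxA',
        (mem_QU_inl i0 i0' sat2 y).mpr hyB, ?_⟩
      rintro ⟨p', q'⟩ ⟨hp', hq'⟩
      obtain ⟨a', rfl⟩ := p'.exists_rep
      obtain ⟨b', rfl⟩ := q'.exists_rep
      cases a' with
      | inl u =>
        cases b' with
        | inl v =>
          have hu := mem_ite_elim ((mem_QU_inl i0 i0' sat1 u).mp hp')
          have hv := (mem_QU_inl i0 i0' sat2 v).mp hq'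
          exact hA₁B (Set.mk_mem_prod hu.2 hv)
        | inr v' => exact hr
      | inr u' =>
        cases b' with
        | inl v => exact hr
        | inr v' =>
          have hu := (mem_QU_inr i0 i0' sat1 u').mp hp'
          have hv := mem_ite_elim ((mem_QU_inr i0 i0' sat2 v').mp hq')
          exact hAB₁' (Set.mk_mem_prod hu hv.2)
    | inr y' =>
      have hxy : tau' x' y' < r := hpq
      obtain ⟨A', B', hA'o, hB'o, hxA', hyB', hAB'⟩ := hO' x' y' hxy
      obtain ⟨A₀, B₀, hA₀o, hB₀o, hiA₀, hiB₀, hAB₀⟩ :=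
        hO i0 i0 (show tau i0 i0 < r by rw [(hi0 i0).1]; exact hr)
      have sat1 : i0 ∈ (if i0' ∈ A' then A₀ else ∅) ↔ i0' ∈ A' := (ite_sat hiA₀).symm
      have sat2 : i0 ∈ (if i0' ∈ B' then B₀ else ∅) ↔ i0' ∈ B' := (ite_sat hiB₀).symm
      refine ⟨QU i0 i0' (if i0' ∈ A' then A₀ else ∅) A',
        QU i0 i0' (if i0' ∈ B' then B₀ else ∅) B',
        isOpen_QU i0 i0' (isOpen_ite' hA₀o) hA'o sat1,
        isOpen_QU i0 i0' (isOpen_ite' hB₀o) hB'o sat2,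
        (mem_QU_inr i0 i0' sat1 x').mpr hxA',
        (mem_QU_inr i0 i0' sat2 y').mpr hyB', ?_⟩
      rintro ⟨p', q'⟩ ⟨hp', hq'⟩
      obtain ⟨a', rfl⟩ := p'.exists_rep
      obtain ⟨b', rfl⟩ := q'.exists_rep
      cases a' with
      | inl u =>
        cases b' with
        | inl v =>
          have hu := mem_ite_elim ((mem_QU_inl i0 i0' sat1 u).mp hp')
          have hv := mem_ite_elim ((mem_QU_inl i0 i0' sat2 v).mp hq')
          exact hAB₀ (Set.mk_mem_prod hu.2 hv.2)
        | inr v' => exact hr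
      | inr u' =>
        cases b' with
        | inl v => exact hr
        | inr v' =>
          have hu := (mem_QU_inr i0 i0' sat1 u').mp hp'
          have hv := (mem_QU_inr i0 i0' sat2 v').mp hq'
          exact hAB' (Set.mk_mem_prod hu hv)

theorem isOpen_superlevel (h_nonneg : ∀ x y, 0 ≤ tau x y)
    (h_nonneg' : ∀ x y, 0 ≤ tau' x y)
    (hc : Continuous fun p : M × M => tau p.1 p.2)
    (hc' : Continuous fun p : M' × M' => tau' p.1 p.2) (r : ℝ) :
    IsOpen {p : Quotient (glueSetoid M M' i0 i0') × Quotient (glueSetoid M M' i0 i0') |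
      r < tauHat tau tau' i0 i0' hi0 hi0' p.1 p.2} := by
  rcases lt_or_ge r 0 with hr0 | hr0
  · have : {p : Quotient (glueSetoid M M' i0 i0') × Quotient (glueSetoid M M' i0 i0') |
        r < tauHat tau tau' i0 i0' hi0 hi0' p.1 p.2} = Set.univ := by
      ext p
      simpa using lt_of_lt_of_le hr0
        (tauHat_nonneg tau tau' i0 i0' hi0 hi0' h_nonneg h_nonneg' p.1 p.2)
    rw [this]; exact isOpen_univ
  · have hO : IsOpen {p : M × M | r < tau p.1 p.2} := isOpen_Ioi.preimage hc
    have hO' : IsOpen {p : M' × M' | r < tau' p.1 p.2} := isOpen_Ioi.preimage hc'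
    rw [isOpen_prod_iff] at hO hO' ⊢
    intro p q hpq
    obtain ⟨a, rfl⟩ := p.exists_rep
    obtain ⟨b, rfl⟩ := q.exists_rep
    cases a with
    | inl x =>
      cases b with
      | inl y =>
        have hxy : r < tau x y := hpq
        obtain ⟨A, B, hAo, hBo, hxA, hyB, hAB⟩ := hO x y hxy
        have hiA : i0 ∉ A := fun h => absurd (hAB (Set.mk_mem_prod h hyB))
          (by rw [Set.mem_setOf_eq, (hi0 y).1]; exact not_lt.2 hr0)
        have hiB : i0 ∉ B := fun h => absurd (hAB (Set.mk_mem_prod hxA h))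
          (by rw [Set.mem_setOf_eq, (hi0 x).2]; exact not_lt.2 hr0)
        have sat1 : i0 ∈ A ↔ i0' ∈ (∅ : Set M') := iff_of_false hiA (Set.notMem_empty _)
        have sat2 : i0 ∈ B ↔ i0' ∈ (∅ : Set M') := iff_of_false hiB (Set.notMem_empty _)
        refine ⟨QU i0 i0' A ∅, QU i0 i0' B ∅,
          isOpen_QU i0 i0' hAo isOpen_empty sat1,
          isOpen_QU i0 i0' hBo isOpen_empty sat2,
          (mem_QU_inl i0 i0' sat1 x).mpr hxA,
          (mem_QU_inl i0 i0' sat2 y).mpr hyB, ?_⟩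
        rintro ⟨p', q'⟩ ⟨hp', hq'⟩
        obtain ⟨a', rfl⟩ := p'.exists_rep
        obtain ⟨b', rfl⟩ := q'.exists_rep
        cases a' with
        | inl u =>
          cases b' with
          | inl v =>
            exact hAB (Set.mk_mem_prod ((mem_QU_inl i0 i0' sat1 u).mp hp')
              ((mem_QU_inl i0 i0' sat2 v).mp hq'))
          | inr v' => exact absurd ((mem_QU_inr i0 i0' sat2 v').mp hq') (Set.notMem_empty _)
        | inr u' => exact absurd ((mem_QU_inr i0 i0' sat1 u').mp hp') (Set.notMem_empty _)
      | inr y' =>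
        have : r < (0 : ℝ) := hpq
        exact absurd this (not_lt.2 hr0)
    | inr x' =>
      cases b with
      | inl y =>
        have : r < (0 : ℝ) := hpq
        exact absurd this (not_lt.2 hr0)
      | inr y' =>
        have hxy : r < tau' x' y' := hpq
        obtain ⟨A', B', hA'o, hB'o, hxA', hyB', hAB'⟩ := hO' x' y' hxy
        have hiA : i0' ∉ A' := fun h => absurd (hAB' (Set.mk_mem_prod h hyB'))
          (by rw [Set.mem_setOf_eq, (hi0' y').1]; exact not_lt.2 hr0)
        have hiB : i0' ∉ B' := fun h => absurd (hAB' (Set.mk_mem_prod hxA' h))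
          (by rw [Set.mem_setOf_eq, (hi0' x').2]; exact not_lt.2 hr0)
        have sat1 : i0 ∈ (∅ : Set M) ↔ i0' ∈ A' := iff_of_false (Set.notMem_empty _) hiA
        have sat2 : i0 ∈ (∅ : Set M) ↔ i0' ∈ B' := iff_of_false (Set.notMem_empty _) hiB
        refine ⟨QU i0 i0' ∅ A', QU i0 i0' ∅ B',
          isOpen_QU i0 i0' isOpen_empty hA'o sat1,
          isOpen_QU i0 i0' isOpen_empty hB'o sat2,
          (mem_QU_inr i0 i0' sat1 x').mpr hxA',
          (mem_QU_inr i0 i0' sat2 y').mpr hyB', ?_⟩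
        rintro ⟨p', q'⟩ ⟨hp', hq'⟩
        obtain ⟨a', rfl⟩ := p'.exists_rep
        obtain ⟨b', rfl⟩ := q'.exists_rep
        cases a' with
        | inl u => exact absurd ((mem_QU_inl i0 i0' sat1 u).mp hp') (Set.notMem_empty _)
        | inr u' =>
          cases b' with
          | inl v => exact absurd ((mem_QU_inl i0 i0' sat2 v).mp hq') (Set.notMem_empty _)
          | inr v' =>
            exact hAB' (Set.mk_mem_prod ((mem_QU_inr i0 i0' sat1 u').mp hp')
              ((mem_QU_inr i0 i0' sat2 v').mp hq'))

theorem tauHat_continuous (h_nonneg : ∀ x y, 0 ≤ tau x y)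
    (h_nonneg' : ∀ x y, 0 ≤ tau' x y)
    (hc : Continuous fun p : M × M => tau p.1 p.2)
    (hc' : Continuous fun p : M' × M' => tau' p.1 p.2) :
    Continuous fun p : Quotient (glueSetoid M M' i0 i0') × Quotient (glueSetoid M M' i0 i0') =>
      tauHat tau tau' i0 i0' hi0 hi0' p.1 p.2 := by
  rw [continuous_def]
  intro s hs
  rw [isOpen_iff_forall_mem_open]
  intro p hp
  obtain ⟨ε, hε, hball⟩ := Metric.isOpen_iff.mp hs _ hp
  set c := tauHat tau tau' i0 i0' hi0 hi0' p.1 p.2 with hc0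
  have hcnn : 0 ≤ c := tauHat_nonneg tau tau' i0 i0' hi0 hi0' h_nonneg h_nonneg' p.1 p.2
  refine ⟨{q | c - ε < tauHat tau tau' i0 i0' hi0 hi0' q.1 q.2} ∩
      {q | tauHat tau tau' i0 i0' hi0 hi0' q.1 q.2 < c + ε}, ?_, ?_, ?_, ?_⟩
  · intro q hq
    apply hball
    rw [Metric.mem_ball, Real.dist_eq, abs_sub_lt_iff]
    have h1 : c - ε < tauHat tau tau' i0 i0' hi0 hi0' q.1 q.2 := hq.1
    have h2 : tauHat tau tau' i0 i0' hi0 hi0' q.1 q.2 < c + ε := hq.2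
    constructor
    · show tauHat tau tau' i0 i0' hi0 hi0' q.1 q.2 - c < ε
      linarith
    · show c - tauHat tau tau' i0 i0' hi0 hi0' q.1 q.2 < ε
      linarith
  · exact (isOpen_superlevel tau tau' i0 i0' hi0 hi0' h_nonneg h_nonneg' hc hc' (c - ε)).inter
      (isOpen_sublevel tau tau' i0 i0' hi0 hi0' hc hc' (c + ε) (by linarith))
  · show c - ε < c
    linarith
  · show c < c + ε
    linarith

theorem tauHat_isCompact (hk : ∀ ε : ℝ, 0 < ε → IsCompact {p : M × M | ε ≤ tau p.1 p.2})
    (hk' : ∀ ε : ℝ, 0 < ε → IsCompact {p : M' × M' | ε ≤ tau' p.1 p.2})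
    (ε : ℝ) (hε : 0 < ε) :
    IsCompact {p : Quotient (glueSetoid M M' i0 i0') × Quotient (glueSetoid M M' i0 i0') |
      ε ≤ tauHat tau tau' i0 i0' hi0 hi0' p.1 p.2} := by
  have hQl : Continuous (fun x : M => (⟦Sum.inl x⟧ : Quotient (glueSetoid M M' i0 i0'))) :=
    continuous_quotient_mk'.comp continuous_inl
  have hQr : Continuous (fun x : M' => (⟦Sum.inr x⟧ : Quotient (glueSetoid M M' i0 i0'))) :=
    continuous_quotient_mk'.comp continuous_inr
  have heq : {p : Quotient (glueSetoid M M' i0 i0') × Quotient (glueSetoid M M' i0 i0') |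
      ε ≤ tauHat tau tau' i0 i0' hi0 hi0' p.1 p.2} =
      (fun p : M × M => ((⟦Sum.inl p.1⟧ : Quotient (glueSetoid M M' i0 i0')), ⟦Sum.inl p.2⟧)) ''
        {p : M × M | ε ≤ tau p.1 p.2} ∪
      (fun p : M' × M' => ((⟦Sum.inr p.1⟧ : Quotient (glueSetoid M M' i0 i0')), ⟦Sum.inr p.2⟧)) ''
        {p : M' × M' | ε ≤ tau' p.1 p.2} := by
    ext ⟨p, q⟩
    constructor
    · intro hpq
      obtain ⟨a, rfl⟩ := p.exists_rep
      obtain ⟨b, rfl⟩ := q.exists_rep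
      cases a with
      | inl x =>
        cases b with
        | inl y => exact Or.inl ⟨(x, y), hpq, rfl⟩
        | inr y' =>
          have h0 : (0:ℝ) < 0 := lt_of_lt_of_le hε hpq
          exact absurd h0 (lt_irrefl 0)
      | inr x' =>
        cases b with
        | inl y =>
          have h0 : (0:ℝ) < 0 := lt_of_lt_of_le hε hpq
          exact absurd h0 (lt_irrefl 0)
        | inr y' => exact Or.inr ⟨(x', y'), hpq, rfl⟩
    · rintro (⟨⟨x, y⟩, h, heq⟩ | ⟨⟨x', y'⟩, h, heq⟩) <;> rw [← heq] <;> exact h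
  rw [heq]
  exact ((hk ε hε).image ((hQl.comp continuous_fst).prodMk (hQl.comp continuous_snd))).union
    ((hk' ε hε).image ((hQr.comp continuous_fst).prodMk (hQr.comp continuous_snd)))

end Top

section Alg

variable (hi0 : ∀ x, tau i0 x = 0 ∧ tau x i0 = 0)
variable (hi0' : ∀ x, tau' i0' x = 0 ∧ tau' x i0' = 0)

theorem tauHat_rev (h_rev : ∀ x y z, 0 < tau x y → 0 < tau y z → tau x y + tau y z ≤ tau x z)
    (h_rev' : ∀ x y z, 0 < tau' x y → 0 < tau' y z → tau' x y + tau' y z ≤ tau' x z) :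
    ∀ p q r, 0 < tauHat tau tau' i0 i0' hi0 hi0' p q →
      0 < tauHat tau tau' i0 i0' hi0 hi0' q r →
      tauHat tau tau' i0 i0' hi0 hi0' p q + tauHat tau tau' i0 i0' hi0 hi0' q r ≤
        tauHat tau tau' i0 i0' hi0 hi0' p r := by
  intro p q r
  obtain ⟨a, rfl⟩ := p.exists_rep
  obtain ⟨b, rfl⟩ := q.exists_rep
  obtain ⟨c, rfl⟩ := r.exists_rep
  cases a <;> cases b <;> cases c <;> intro h1 h2 <;>
    first
      | exact h_rev _ _ _ h1 h2
      | exact h_rev' _ _ _ h1 h2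
      | exact absurd h1 (lt_irrefl 0)
      | exact absurd h2 (lt_irrefl 0)

theorem nDist_inl (x y : M) :
    nDist (tauHat tau tau' i0 i0' hi0 hi0') ⟦Sum.inl x⟧ ⟦Sum.inl y⟧ = nDist tau x y := by
  have e1 : (Set.range fun z : Quotient (glueSetoid M M' i0 i0') =>
      |tauHat tau tau' i0 i0' hi0 hi0' ⟦Sum.inl x⟧ z -
        tauHat tau tau' i0 i0' hi0 hi0' ⟦Sum.inl y⟧ z|) =
      Set.range fun z : M => |tau x z - tau y z| := by
    ext r
    constructor
    · rintro ⟨z, rfl⟩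
      obtain ⟨a, rfl⟩ := z.exists_rep
      cases a with
      | inl w => exact ⟨w, rfl⟩
      | inr w' =>
        refine ⟨i0, ?_⟩
        show |tau x i0 - tau y i0| = |(0 : ℝ) - 0|
        rw [(hi0 x).2, (hi0 y).2]
    · rintro ⟨w, rfl⟩
      exact ⟨⟦Sum.inl w⟧, rfl⟩
  have e2 : (Set.range fun z : Quotient (glueSetoid M M' i0 i0') =>
      |tauHat tau tau' i0 i0' hi0 hi0' z ⟦Sum.inl x⟧ -
        tauHat tau tau' i0 i0' hi0 hi0' z ⟦Sum.inl y⟧|) =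
      Set.range fun z : M => |tau z x - tau z y| := by
    ext r
    constructor
    · rintro ⟨z, rfl⟩
      obtain ⟨a, rfl⟩ := z.exists_rep
      cases a with
      | inl w => exact ⟨w, rfl⟩
      | inr w' =>
        refine ⟨i0, ?_⟩
        show |tau i0 x - tau i0 y| = |(0 : ℝ) - 0|
        rw [(hi0 x).1, (hi0 y).1]
    · rintro ⟨w, rfl⟩
      exact ⟨⟦Sum.inl w⟧, rfl⟩
  unfold nDist
  exact congrArg₂ max (congrArg sSup e1) (congrArg sSup e2)

theorem nDist_inr (x y : M') :
    nDist (tauHat tau tau' i0 i0' hi0 hi0') ⟦Sum.inr x⟧ ⟦Sum.inr y⟧ = nDist tau' x y := by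
  have e1 : (Set.range fun z : Quotient (glueSetoid M M' i0 i0') =>
      |tauHat tau tau' i0 i0' hi0 hi0' ⟦Sum.inr x⟧ z -
        tauHat tau tau' i0 i0' hi0 hi0' ⟦Sum.inr y⟧ z|) =
      Set.range fun z : M' => |tau' x z - tau' y z| := by
    ext r
    constructor
    · rintro ⟨z, rfl⟩
      obtain ⟨a, rfl⟩ := z.exists_rep
      cases a with
      | inr w => exact ⟨w, rfl⟩
      | inl w =>
        refine ⟨i0', ?_⟩
        show |tau' x i0' - tau' y i0'| = |(0 : ℝ) - 0|
        rw [(hi0' x).2, (hi0' y).2]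
    · rintro ⟨w, rfl⟩
      exact ⟨⟦Sum.inr w⟧, rfl⟩
  have e2 : (Set.range fun z : Quotient (glueSetoid M M' i0 i0') =>
      |tauHat tau tau' i0 i0' hi0 hi0' z ⟦Sum.inr x⟧ -
        tauHat tau tau' i0 i0' hi0 hi0' z ⟦Sum.inr y⟧|) =
      Set.range fun z : M' => |tau' z x - tau' z y| := by
    ext r
    constructor
    · rintro ⟨z, rfl⟩
      obtain ⟨a, rfl⟩ := z.exists_rep
      cases a with
      | inr w => exact ⟨w, rfl⟩
      | inl w =>
        refine ⟨i0', ?_⟩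
        show |tau' i0' x - tau' i0' y| = |(0 : ℝ) - 0|
        rw [(hi0' x).1, (hi0' y).1]
    · rintro ⟨w, rfl⟩
      exact ⟨⟦Sum.inr w⟧, rfl⟩
  unfold nDist
  exact congrArg₂ max (congrArg sSup e1) (congrArg sSup e2)

end Alg

end GlueAux

/-- Disjoint union of two bounded Lorentzian metric spaces with identified
spacelike boundaries: there is a time separation function `τ̂` on the quotient
`M̂` of `M ⊕ M'` identifying `i⁰` with `i'⁰` which equals `τ` on `M × M`, `τ'`
on `M' × M'` and `0` on mixed pairs, makes `M̂` a bounded Lorentzian metric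
space, and whose distinction metric restricts to that of `M` on `M × M` and to
that of `M'` on `M' × M'`. -/
theorem disjoint_union_blms
    {M M' : Type*} (tau : M → M → ℝ) (tau' : M' → M' → ℝ)
    (h_nonneg : ∀ x y, 0 ≤ tau x y)
    (h_rev : ∀ x y z, 0 < tau x y → 0 < tau y z → tau x y + tau y z ≤ tau x z)
    (h_top : ∃ t : TopologicalSpace M,
      (@Continuous (M × M) ℝ (@instTopologicalSpaceProd M M t t) _ (fun p => tau p.1 p.2)) ∧
      ∀ ε : ℝ, 0 < ε → @IsCompact (M × M) (@instTopologicalSpaceProd M M t t)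
        {p : M × M | ε ≤ tau p.1 p.2})
    (h_dist : ∀ x y : M, x ≠ y → ∃ z, tau x z ≠ tau y z ∨ tau z x ≠ tau z y)
    (h_nonneg' : ∀ x y, 0 ≤ tau' x y)
    (h_rev' : ∀ x y z, 0 < tau' x y → 0 < tau' y z → tau' x y + tau' y z ≤ tau' x z)
    (h_top' : ∃ t : TopologicalSpace M',
      (@Continuous (M' × M') ℝ (@instTopologicalSpaceProd M' M' t t) _ (fun p => tau' p.1 p.2)) ∧
      ∀ ε : ℝ, 0 < ε → @IsCompact (M' × M') (@instTopologicalSpaceProd M' M' t t)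
        {p : M' × M' | ε ≤ tau' p.1 p.2})
    (h_dist' : ∀ x y : M', x ≠ y → ∃ z, tau' x z ≠ tau' y z ∨ tau' z x ≠ tau' z y)
    (i0 : M) (hi0 : ∀ x, tau i0 x = 0 ∧ tau x i0 = 0)
    (i0' : M') (hi0' : ∀ x, tau' i0' x = 0 ∧ tau' x i0' = 0) :
    ∃ tauHat : Quotient (glueSetoid M M' i0 i0') → Quotient (glueSetoid M M' i0 i0') → ℝ,
      (∀ x y : M, tauHat (Quotient.mk _ (Sum.inl x)) (Quotient.mk _ (Sum.inl y)) = tau x y) ∧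
      (∀ x y : M', tauHat (Quotient.mk _ (Sum.inr x)) (Quotient.mk _ (Sum.inr y)) = tau' x y) ∧
      (∀ (x : M) (y : M'), tauHat (Quotient.mk _ (Sum.inl x)) (Quotient.mk _ (Sum.inr y)) = 0 ∧
        tauHat (Quotient.mk _ (Sum.inr y)) (Quotient.mk _ (Sum.inl x)) = 0) ∧
      (∀ p q, 0 ≤ tauHat p q) ∧
      (∀ p q r, 0 < tauHat p q → 0 < tauHat q r → tauHat p q + tauHat q r ≤ tauHat p r) ∧
      (∃ t : TopologicalSpace (Quotient (glueSetoid M M' i0 i0')),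
        (@Continuous _ ℝ (@instTopologicalSpaceProd _ _ t t) _ (fun p => tauHat p.1 p.2)) ∧
        ∀ ε : ℝ, 0 < ε → @IsCompact _ (@instTopologicalSpaceProd _ _ t t)
          {p | ε ≤ tauHat p.1 p.2}) ∧
      (∀ p q, p ≠ q → ∃ r, tauHat p r ≠ tauHat q r ∨ tauHat r p ≠ tauHat r q) ∧
      (∀ x y : M, nDist tauHat (Quotient.mk _ (Sum.inl x)) (Quotient.mk _ (Sum.inl y)) =
        nDist tau x y) ∧
      (∀ x y : M', nDist tauHat (Quotient.mk _ (Sum.inr x)) (Quotient.mk _ (Sum.inr y)) =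
        nDist tau' x y) := by
  obtain ⟨t, htc, htk⟩ := h_top
  obtain ⟨t', htc', htk'⟩ := h_top'
  letI := t
  letI := t'
  refine ⟨GlueAux.tauHat tau tau' i0 i0' hi0 hi0', fun x y => rfl, fun x y => rfl,
    fun x y => ⟨rfl, rfl⟩,
    GlueAux.tauHat_nonneg tau tau' i0 i0' hi0 hi0' h_nonneg h_nonneg',
    GlueAux.tauHat_rev tau tau' i0 i0' hi0 hi0' h_rev h_rev',
    ⟨inferInstance,
      GlueAux.tauHat_continuous tau tau' i0 i0' hi0 hi0' h_nonneg h_nonneg' htc htc',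
      GlueAux.tauHat_isCompact tau tau' i0 i0' hi0 hi0' htk htk'⟩,
    ?_,
    GlueAux.nDist_inl tau tau' i0 i0' hi0 hi0',
    GlueAux.nDist_inr tau tau' i0 i0' hi0 hi0'⟩
  -- point distinction
  intro p q hpq
  obtain ⟨a, rfl⟩ := p.exists_rep
  obtain ⟨b, rfl⟩ := q.exists_rep
  cases a with
  | inl x =>
    cases b with
    | inl y =>
      have hxy : x ≠ y := fun h => hpq (by rw [h])
      obtain ⟨z, hz⟩ := h_dist x y hxy
      refine ⟨⟦Sum.inl z⟧, ?_⟩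
      exact hz
    | inr y' =>
      by_cases hx : x = i0
      · subst hx
        have hy' : y' ≠ i0' := by
          intro h
          subst h
          exact hpq (Quotient.sound (Or.inr (Or.inl ⟨rfl, rfl⟩)))
        obtain ⟨z, hz⟩ := h_dist' y' i0' hy'
        refine ⟨⟦Sum.inr z⟧, ?_⟩
        rcases hz with hz | hz
        · refine Or.inl ?_
          show (0 : ℝ) ≠ tau' y' z
          rw [(hi0' z).1] at hz
          exact fun h => hz h.symm
        · refine Or.inr ?_
          show (0 : ℝ) ≠ tau' z y'
          rw [(hi0' z).2] at hz
          exact fun h => hz h.symm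
      · obtain ⟨z, hz⟩ := h_dist x i0 hx
        refine ⟨⟦Sum.inl z⟧, ?_⟩
        rcases hz with hz | hz
        · refine Or.inl ?_
          show tau x z ≠ (0 : ℝ)
          rw [(hi0 z).1] at hz
          exact hz
        · refine Or.inr ?_
          show tau z x ≠ (0 : ℝ)
          rw [(hi0 z).2] at hz
          exact hz
  | inr x' =>
    cases b with
    | inl y =>
      by_cases hx : x' = i0'
      · subst hx
        have hy : y ≠ i0 := by
          intro h
          subst h
          exact hpq (Quotient.sound (Or.inr (Or.inr ⟨rfl, rfl⟩)))
        obtain ⟨z, hz⟩ := h_dist y i0 hy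
        refine ⟨⟦Sum.inl z⟧, ?_⟩
        rcases hz with hz | hz
        · refine Or.inl ?_
          show (0 : ℝ) ≠ tau y z
          rw [(hi0 z).1] at hz
          exact fun h => hz h.symm
        · refine Or.inr ?_
          show (0 : ℝ) ≠ tau z y
          rw [(hi0 z).2] at hz
          exact fun h => hz h.symm
      · obtain ⟨z, hz⟩ := h_dist' x' i0' hx
        refine ⟨⟦Sum.inr z⟧, ?_⟩
        rcases hz with hz | hz
        · refine Or.inl ?_
          show tau' x' z ≠ (0 : ℝ)
          rw [(hi0' z).1] at hz
          exact hz
        · refine Or.inr ?_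
          show tau' z x' ≠ (0 : ℝ)
          rw [(hi0' z).2] at hz
          exact hz
    | inr y' =>
      have hxy : x' ≠ y' := fun h => hpq (by rw [h])
      obtain ⟨z, hz⟩ := h_dist' x' y' hxy
      exact ⟨⟦Sum.inr z⟧, hz⟩
end

section
/- Extension of distance-preserving maps: Let (M, τ) and (M', τ') be bounded Lorentzian metric spaces, D a dense subset of M, and ι : D → M' a distance-preserving map (τ'(ι(x), ι(y)) = τ(x,y) for x, y ∈ D) whose image ι(D) is dense in M'. Then ι extends uniquely to a bijective distance-preserving map from M minus its spacelike boundary onto M' minus its spacelike boundary. -/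
open Filter Topology Set

/-- Limit transfer lemma: if `w` is a cluster point of `ι` along `𝓝 y ⊓ 𝓟 D` and
`ψ ∘ ι = φ` on `D` with `φ, ψ` continuous, then `ψ w = φ y`. -/
lemma BLMS.dist_lim {M M' : Type*} [TopologicalSpace M] [TopologicalSpace M']
    {D : Set M} {ι : M → M'} {φ : M → ℝ} {ψ : M' → ℝ}
    (hφ : Continuous φ) (hψ : Continuous ψ)
    (hagree : ∀ r ∈ D, ψ (ι r) = φ r)
    {y : M} {w : M'} (hw : ClusterPt w (Filter.map ι (𝓝 y ⊓ 𝓟 D))) :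
    ψ w = φ y := by
  have hev : ψ ∘ ι =ᶠ[𝓝 y ⊓ 𝓟 D] φ := by
    filter_upwards [Filter.mem_inf_of_right (Filter.mem_principal_self D)] with r hr
    exact hagree r hr
  have htend : Tendsto ψ (Filter.map ι (𝓝 y ⊓ 𝓟 D)) (𝓝 (φ y)) := by
    show Filter.map ψ (Filter.map ι (𝓝 y ⊓ 𝓟 D)) ≤ 𝓝 (φ y)
    rw [Filter.map_map, Filter.map_congr hev]
    exact (hφ.tendsto y).mono_left inf_le_left
  exact eq_of_nhds_neBot (hw.map hψ.continuousAt htend)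

/-- Inverse limit transfer lemma: if `x` is a cluster point of `comap ι (𝓝 y') ⊓ 𝓟 D`
and `ψ ∘ ι = φ` on `D` with `φ, ψ` continuous, then `φ x = ψ y'`. -/
lemma BLMS.dist_lim_inv {M M' : Type*} [TopologicalSpace M] [TopologicalSpace M']
    {D : Set M} {ι : M → M'} {φ : M → ℝ} {ψ : M' → ℝ}
    (hφ : Continuous φ) (hψ : Continuous ψ)
    (hagree : ∀ r ∈ D, ψ (ι r) = φ r)
    {y' : M'} {x : M} (hx : ClusterPt x (Filter.comap ι (𝓝 y') ⊓ 𝓟 D)) :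
    φ x = ψ y' := by
  set G := Filter.comap ι (𝓝 y') ⊓ 𝓟 D with hG
  have htι : Tendsto ι G (𝓝 y') := tendsto_comap.mono_left inf_le_left
  have hev : φ =ᶠ[G] (fun r => ψ (ι r)) := by
    filter_upwards [Filter.mem_inf_of_right (Filter.mem_principal_self D)] with r hr
    exact (hagree r hr).symm
  have htend : Tendsto φ G (𝓝 (ψ y')) := by
    show Filter.map φ G ≤ 𝓝 (ψ y')
    rw [Filter.map_congr hev]
    exact (hψ.tendsto y').comp htι
  exact eq_of_nhds_neBot (hx.map hφ.continuousAt htend)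

/-- Existence of a cluster point of `ι` along `𝓝 x ⊓ 𝓟 D`, given a point `q ∈ D`
with `tau x q > c > 0`, using compactness of superlevel sets of `tau'`. -/
lemma BLMS.exists_cluster {M M' : Type*} [TopologicalSpace M] [TopologicalSpace M']
    {tau : M → M → ℝ} {tau' : M' → M' → ℝ}
    (h_compact' : ∀ ε : ℝ, 0 < ε → IsCompact {p : M' × M' | ε ≤ tau' p.1 p.2})
    {D : Set M} (hD : Dense D) {ι : M → M'}
    (hι : ∀ x ∈ D, ∀ y ∈ D, tau' (ι x) (ι y) = tau x y)
    {x q : M} (hq : q ∈ D) {c : ℝ} (hc : 0 < c) (hxq : c < tau x q)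
    (hU : IsOpen {p : M | c < tau p q})
    (hScl : IsClosed {w : M' | c ≤ tau' w (ι q)}) :
    ∃ y : M', ClusterPt y (Filter.map ι (𝓝 x ⊓ 𝓟 D)) := by
  set U := {p : M | c < tau p q} with hUdef
  set F := 𝓝 x ⊓ 𝓟 (D ∩ U) with hF
  have hFne : F.NeBot := by
    rw [hF, Filter.inf_principal_neBot_iff]
    intro t ht
    have h1 : t ∩ U ∈ 𝓝 x := Filter.inter_mem ht (hU.mem_nhds hxq)
    rcases mem_closure_iff_nhds.mp (hD x) _ h1 with ⟨p, ⟨hpt, hpU⟩, hpD⟩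
    exact ⟨p, hpt, hpD, hpU⟩
  set S := {w : M' | c ≤ tau' w (ι q)} with hS
  have hScompact : IsCompact S :=
    ((h_compact' c hc).image continuous_fst).of_isClosed_subset hScl
      (fun w hw => ⟨(w, ι q), hw, rfl⟩)
  have hle : Filter.map ι F ≤ 𝓟 S := by
    rw [Filter.le_principal_iff, Filter.mem_map]
    refine Filter.mem_inf_of_right (Filter.mem_principal.mpr ?_)
    rintro p ⟨hpD, hpU⟩
    show c ≤ tau' (ι p) (ι q)
    rw [hι p hpD q hq]
    exact le_of_lt hpU
  haveI : (Filter.map ι F).NeBot := hFne.map ι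
  obtain ⟨y, _, hy⟩ := hScompact hle
  refine ⟨y, hy.mono (Filter.map_mono (inf_le_inf le_rfl ?_))⟩
  exact principal_mono.mpr Set.inter_subset_left

/-- Existence of a cluster point of `comap ι (𝓝 y') ⊓ 𝓟 D`, given `q ∈ D` with
`tau' y' (ι q) > c > 0`, using compactness of superlevel sets of `tau`. -/
lemma BLMS.exists_cluster_inv {M M' : Type*} [TopologicalSpace M] [TopologicalSpace M']
    {tau : M → M → ℝ} {tau' : M' → M' → ℝ}
    (h_compact : ∀ ε : ℝ, 0 < ε → IsCompact {p : M × M | ε ≤ tau p.1 p.2})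
    {D : Set M} {ι : M → M'}
    (hι : ∀ x ∈ D, ∀ y ∈ D, tau' (ι x) (ι y) = tau x y)
    (hιD : Dense (ι '' D))
    {y' : M'} {q : M} (hq : q ∈ D) {c : ℝ} (hc : 0 < c) (hyq : c < tau' y' (ι q))
    (hU : IsOpen {w : M' | c < tau' w (ι q)})
    (hScl : IsClosed {p : M | c ≤ tau p q}) :
    ∃ x : M, c ≤ tau x q ∧ ClusterPt x (Filter.comap ι (𝓝 y') ⊓ 𝓟 D) := by
  set G := Filter.comap ι (𝓝 y') ⊓ 𝓟 D with hG
  haveI hGne : G.NeBot := by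
    rw [hG, Filter.inf_principal_neBot_iff]
    intro t ht
    rcases Filter.mem_comap.mp ht with ⟨V, hV, hVt⟩
    rcases mem_closure_iff_nhds.mp (hιD y') V hV with ⟨w, hwV, p, hpD, rfl⟩
    exact ⟨p, hVt hwV, hpD⟩
  set S := {p : M | c ≤ tau p q} with hS
  have hScompact : IsCompact S :=
    ((h_compact c hc).image continuous_fst).of_isClosed_subset hScl
      (fun p hp => ⟨(p, q), hp, rfl⟩)
  have hle : G ≤ 𝓟 S := by
    rw [Filter.le_principal_iff]
    have h1 : ι ⁻¹' {w | c < tau' w (ι q)} ∈ Filter.comap ι (𝓝 y') :=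
      Filter.preimage_mem_comap (hU.mem_nhds hyq)
    have h2 : ι ⁻¹' {w | c < tau' w (ι q)} ∩ D ∈ G :=
      Filter.inter_mem (Filter.mem_inf_of_left h1)
        (Filter.mem_inf_of_right (Filter.mem_principal_self D))
    refine Filter.mem_of_superset h2 ?_
    rintro p ⟨hp1, hp2⟩
    show c ≤ tau p q
    rw [← hι p hp2 q hq]
    exact le_of_lt hp1
  obtain ⟨x, hxS, hx⟩ := hScompact hle
  exact ⟨x, hxS, hx⟩

/-- Points are distinguished by `tau`-values against a dense set. -/
lemma BLMS.ext_unique {N : Type*} [TopologicalSpace N] {tau : N → N → ℝ}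
    (h_cont : Continuous fun p : N × N => tau p.1 p.2)
    (h_dist : ∀ x y : N, x ≠ y → ∃ z, tau x z ≠ tau y z ∨ tau z x ≠ tau z y)
    {s : Set N} (hs : Dense s) {y₁ y₂ : N}
    (h : ∀ z ∈ s, tau z y₁ = tau z y₂ ∧ tau y₁ z = tau y₂ z) :
    y₁ = y₂ := by
  have c1 : Continuous fun z => tau z y₁ :=
    h_cont.comp (continuous_id.prodMk continuous_const)
  have c2 : Continuous fun z => tau z y₂ :=
    h_cont.comp (continuous_id.prodMk continuous_const)
  have c3 : Continuous fun z => tau y₁ z :=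
    h_cont.comp (continuous_const.prodMk continuous_id)
  have c4 : Continuous fun z => tau y₂ z :=
    h_cont.comp (continuous_const.prodMk continuous_id)
  have e1 : (fun z => tau z y₁) = fun z => tau z y₂ :=
    Continuous.ext_on hs c1 c2 (fun z hz => (h z hz).1)
  have e2 : (fun z => tau y₁ z) = fun z => tau y₂ z :=
    Continuous.ext_on hs c3 c4 (fun z hz => (h z hz).2)
  by_contra hne
  rcases h_dist y₁ y₂ hne with ⟨z, hz | hz⟩
  · exact hz (congrFun e2 z)
  · exact hz (congrFun e1 z)

/-- The (at most one-point) set of spacelike boundary points of a time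
separation function. -/
def spacelikeBoundarySet {M : Type*} (tau : M → M → ℝ) : Set M :=
  {x | ∀ z, tau x z = 0 ∧ tau z x = 0}

/-- Extension of distance-preserving maps: if `D ⊆ M` is dense and
`ι : D → M'` is distance-preserving with dense image, then `ι` extends uniquely
to a bijective distance-preserving map from `M` minus its spacelike boundary
onto `M'` minus its spacelike boundary. -/
theorem extension_of_distance_preserving
    {M M' : Type*} [TopologicalSpace M] [TopologicalSpace M']
    (tau : M → M → ℝ) (tau' : M' → M' → ℝ)
    (h_nonneg : ∀ x y, 0 ≤ tau x y)
    (h_rev : ∀ x y z, 0 < tau x y → 0 < tau y z → tau x y + tau y z ≤ tau x z)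
    (h_cont : Continuous fun p : M × M => tau p.1 p.2)
    (h_compact : ∀ ε : ℝ, 0 < ε → IsCompact {p : M × M | ε ≤ tau p.1 p.2})
    (h_dist : ∀ x y : M, x ≠ y → ∃ z, tau x z ≠ tau y z ∨ tau z x ≠ tau z y)
    (h_nonneg' : ∀ x y, 0 ≤ tau' x y)
    (h_rev' : ∀ x y z, 0 < tau' x y → 0 < tau' y z → tau' x y + tau' y z ≤ tau' x z)
    (h_cont' : Continuous fun p : M' × M' => tau' p.1 p.2)
    (h_compact' : ∀ ε : ℝ, 0 < ε → IsCompact {p : M' × M' | ε ≤ tau' p.1 p.2})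
    (h_dist' : ∀ x y : M', x ≠ y → ∃ z, tau' x z ≠ tau' y z ∨ tau' z x ≠ tau' z y)
    (D : Set M) (hD : Dense D)
    (ι : M → M') (hι : ∀ x ∈ D, ∀ y ∈ D, tau' (ι x) (ι y) = tau x y)
    (hιD : Dense (ι '' D)) :
    ∃ f : M → M',
      (∀ x ∈ D \ spacelikeBoundarySet tau, f x = ι x) ∧
      Set.BijOn f (spacelikeBoundarySet tau)ᶜ (spacelikeBoundarySet tau')ᶜ ∧
      (∀ x ∈ (spacelikeBoundarySet tau)ᶜ, ∀ y ∈ (spacelikeBoundarySet tau)ᶜ,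
        tau' (f x) (f y) = tau x y) ∧
      ∀ g : M → M',
        (∀ x ∈ D \ spacelikeBoundarySet tau, g x = ι x) →
        Set.MapsTo g (spacelikeBoundarySet tau)ᶜ (spacelikeBoundarySet tau')ᶜ →
        (∀ x ∈ (spacelikeBoundarySet tau)ᶜ, ∀ y ∈ (spacelikeBoundarySet tau)ᶜ,
          tau' (g x) (g y) = tau x y) →
        Set.EqOn f g (spacelikeBoundarySet tau)ᶜ := by
  classical
  -- continuity of partial applications
  have cont1 : ∀ a : M, Continuous fun z => tau a z :=
    fun a => h_cont.comp (continuous_const.prodMk continuous_id)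
  have cont2 : ∀ a : M, Continuous fun z => tau z a :=
    fun a => h_cont.comp (continuous_id.prodMk continuous_const)
  have cont1' : ∀ a : M', Continuous fun z => tau' a z :=
    fun a => h_cont'.comp (continuous_const.prodMk continuous_id)
  have cont2' : ∀ a : M', Continuous fun z => tau' z a :=
    fun a => h_cont'.comp (continuous_id.prodMk continuous_const)
  -- flipped compactness
  have hcompactflip : ∀ ε : ℝ, 0 < ε → IsCompact {p : M × M | ε ≤ tau p.2 p.1} := by
    intro ε hε
    have h1 := (h_compact ε hε).image continuous_swap
    have h2 : Prod.swap '' {p : M × M | ε ≤ tau p.1 p.2} = {p : M × M | ε ≤ tau p.2 p.1} := by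
      rw [Set.image_swap_eq_preimage_swap]; rfl
    rwa [h2] at h1
  have hcompactflip' : ∀ ε : ℝ, 0 < ε → IsCompact {p : M' × M' | ε ≤ tau' p.2 p.1} := by
    intro ε hε
    have h1 := (h_compact' ε hε).image continuous_swap
    have h2 : Prod.swap '' {p : M' × M' | ε ≤ tau' p.1 p.2}
        = {p : M' × M' | ε ≤ tau' p.2 p.1} := by
      rw [Set.image_swap_eq_preimage_swap]; rfl
    rwa [h2] at h1
  have hιflip : ∀ x ∈ D, ∀ y ∈ D, tau' (ι y) (ι x) = tau y x :=
    fun x hx y hy => hι y hy x hx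
  -- membership characterization
  have hBmem : ∀ x : M, x ∉ spacelikeBoundarySet tau ↔ ∃ z, 0 < tau x z ∨ 0 < tau z x := by
    intro x
    simp only [spacelikeBoundarySet, Set.mem_setOf_eq, not_forall]
    constructor
    · rintro ⟨z, hz⟩
      rcases not_and_or.mp hz with h | h
      · exact ⟨z, Or.inl (lt_of_le_of_ne (h_nonneg x z) (Ne.symm h))⟩
      · exact ⟨z, Or.inr (lt_of_le_of_ne (h_nonneg z x) (Ne.symm h))⟩
    · rintro ⟨z, h | h⟩
      · exact ⟨z, fun hz => (ne_of_gt h) hz.1⟩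
      · exact ⟨z, fun hz => (ne_of_gt h) hz.2⟩
  have hBmem' : ∀ x : M', x ∉ spacelikeBoundarySet tau' ↔
      ∃ z, 0 < tau' x z ∨ 0 < tau' z x := by
    intro x
    simp only [spacelikeBoundarySet, Set.mem_setOf_eq, not_forall]
    constructor
    · rintro ⟨z, hz⟩
      rcases not_and_or.mp hz with h | h
      · exact ⟨z, Or.inl (lt_of_le_of_ne (h_nonneg' x z) (Ne.symm h))⟩
      · exact ⟨z, Or.inr (lt_of_le_of_ne (h_nonneg' z x) (Ne.symm h))⟩
    · rintro ⟨z, h | h⟩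
      · exact ⟨z, fun hz => (ne_of_gt h) hz.1⟩
      · exact ⟨z, fun hz => (ne_of_gt h) hz.2⟩
  -- find a timelike-related witness in D
  have hQ : ∀ x : M, x ∉ spacelikeBoundarySet tau →
      ∃ q ∈ D, 0 < tau x q ∨ 0 < tau q x := by
    intro x hx
    rcases (hBmem x).mp hx with ⟨z, hz | hz⟩
    · rcases hD.exists_mem_open (isOpen_lt continuous_const (cont1 x)) ⟨z, hz⟩ with ⟨q, hqD, hq⟩
      exact ⟨q, hqD, Or.inl hq⟩
    · rcases hD.exists_mem_open (isOpen_lt continuous_const (cont2 x)) ⟨z, hz⟩ with ⟨q, hqD, hq⟩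
      exact ⟨q, hqD, Or.inr hq⟩
  -- existence of cluster point limits
  have hex0 : ∀ x : M, x ∉ spacelikeBoundarySet tau →
      ∃ y : M', ClusterPt y (Filter.map ι (𝓝 x ⊓ 𝓟 D)) := by
    intro x hx
    rcases hQ x hx with ⟨q, hqD, hpos | hpos⟩
    · exact BLMS.exists_cluster h_compact' hD hι hqD (half_pos hpos) (half_lt_self hpos)
        (isOpen_lt continuous_const (cont2 q))
        (isClosed_le continuous_const (cont2' (ι q)))
    · exact BLMS.exists_cluster (tau := fun a b => tau b a) (tau' := fun a b => tau' b a)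
        hcompactflip' hD hιflip hqD (half_pos hpos) (half_lt_self hpos)
        (isOpen_lt continuous_const (cont1 q))
        (isClosed_le continuous_const (cont1' (ι q)))
  have hex : ∀ x : M, ∃ y : M',
      x ∉ spacelikeBoundarySet tau → ClusterPt y (Filter.map ι (𝓝 x ⊓ 𝓟 D)) := by
    intro x
    by_cases hx : x ∉ spacelikeBoundarySet tau
    · rcases hex0 x hx with ⟨y, hy⟩; exact ⟨y, fun _ => hy⟩
    · exact ⟨ι x, fun h => absurd h hx⟩
  choose f hf using hex
  -- key property of f
  have hfP : ∀ x : M, x ∉ spacelikeBoundarySet tau → ∀ p ∈ D,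
      tau' (ι p) (f x) = tau p x ∧ tau' (f x) (ι p) = tau x p := by
    intro x hx p hp
    constructor
    · exact BLMS.dist_lim (cont1 p) (cont1' (ι p)) (fun r hr => hι p hp r hr) (hf x hx)
    · exact BLMS.dist_lim (cont2 p) (cont2' (ι p)) (fun r hr => hι r hr p hp) (hf x hx)
  -- uniqueness of points with the key property
  have huniq : ∀ (x : M) (y₁ y₂ : M'),
      (∀ p ∈ D, tau' (ι p) y₁ = tau p x ∧ tau' y₁ (ι p) = tau x p) →
      (∀ p ∈ D, tau' (ι p) y₂ = tau p x ∧ tau' y₂ (ι p) = tau x p) → y₁ = y₂ := by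
    intro x y₁ y₂ h1 h2
    refine BLMS.ext_unique h_cont' h_dist' hιD ?_
    rintro z ⟨p, hp, rfl⟩
    exact ⟨((h1 p hp).1).trans ((h2 p hp).1).symm, ((h1 p hp).2).trans ((h2 p hp).2).symm⟩
  -- f agrees with ι on D minus the boundary
  have hfι : ∀ x ∈ D \ spacelikeBoundarySet tau, f x = ι x := by
    rintro x ⟨hxD, hxB⟩
    exact huniq x (f x) (ι x) (hfP x hxB)
      (fun p hp => ⟨hι p hp x hxD, hι x hxD p hp⟩)
  -- f maps outside the boundary
  have hmaps : ∀ x : M, x ∉ spacelikeBoundarySet tau →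
      f x ∉ spacelikeBoundarySet tau' := by
    intro x hx hmem
    rcases hQ x hx with ⟨q, hqD, hpos | hpos⟩
    · have h1 := (hfP x hx q hqD).2
      rw [(hmem (ι q)).1] at h1
      exact (ne_of_gt hpos) h1.symm
    · have h1 := (hfP x hx q hqD).1
      rw [(hmem (ι q)).2] at h1
      exact (ne_of_gt hpos) h1.symm
  -- f preserves distances
  have hdist : ∀ x : M, x ∉ spacelikeBoundarySet tau → ∀ y : M,
      y ∉ spacelikeBoundarySet tau → tau' (f x) (f y) = tau x y := by
    intro x hx y hy
    exact BLMS.dist_lim (cont1 x) (cont1' (f x)) (fun r hr => (hfP x hx r hr).2) (hf y hy)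
  -- injectivity
  have hinj : ∀ x : M, x ∉ spacelikeBoundarySet tau → ∀ y : M,
      y ∉ spacelikeBoundarySet tau → f x = f y → x = y := by
    intro x hx y hy hfeq
    refine BLMS.ext_unique h_cont h_dist hD ?_
    intro p hp
    constructor
    · rw [← (hfP x hx p hp).1, ← (hfP y hy p hp).1, hfeq]
    · rw [← (hfP x hx p hp).2, ← (hfP y hy p hp).2, hfeq]
  -- surjectivity
  have hsurj : ∀ y' : M', y' ∉ spacelikeBoundarySet tau' →
      ∃ x : M, x ∉ spacelikeBoundarySet tau ∧ f x = y' := by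
    intro y' hy'
    have key : ∃ x : M, x ∉ spacelikeBoundarySet tau ∧
        ClusterPt x (Filter.comap ι (𝓝 y') ⊓ 𝓟 D) := by
      rcases (hBmem' y').mp hy' with ⟨z', hz | hz⟩
      · rcases hιD.exists_mem_open (isOpen_lt continuous_const (cont1' y')) ⟨z', hz⟩ with
          ⟨w, ⟨q, hqD, rfl⟩, hq⟩
        obtain ⟨x, hxS, hx⟩ := BLMS.exists_cluster_inv h_compact hι hιD hqD
          (half_pos hq) (half_lt_self hq)
          (isOpen_lt continuous_const (cont2' (ι q)))
          (isClosed_le continuous_const (cont2 q))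
        exact ⟨x, (hBmem x).mpr ⟨q, Or.inl (lt_of_lt_of_le (half_pos hq) hxS)⟩, hx⟩
      · rcases hιD.exists_mem_open (isOpen_lt continuous_const (cont2' y')) ⟨z', hz⟩ with
          ⟨w, ⟨q, hqD, rfl⟩, hq⟩
        obtain ⟨x, hxS, hx⟩ := BLMS.exists_cluster_inv
          (tau := fun a b => tau b a) (tau' := fun a b => tau' b a)
          hcompactflip hιflip hιD hqD (half_pos hq) (half_lt_self hq)
          (isOpen_lt continuous_const (cont1' (ι q)))
          (isClosed_le continuous_const (cont1 q))
        exact ⟨x, (hBmem x).mpr ⟨q, Or.inr (lt_of_lt_of_le (half_pos hq) hxS)⟩, hx⟩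
    obtain ⟨x, hxB, hx⟩ := key
    have hPy' : ∀ p ∈ D, tau' (ι p) y' = tau p x ∧ tau' y' (ι p) = tau x p := by
      intro p hp
      constructor
      · exact (BLMS.dist_lim_inv (cont1 p) (cont1' (ι p)) (fun r hr => hι p hp r hr) hx).symm
      · exact (BLMS.dist_lim_inv (cont2 p) (cont2' (ι p)) (fun r hr => hι r hr p hp) hx).symm
    exact ⟨x, hxB, huniq x (f x) y' (hfP x hxB) hPy'⟩
  refine ⟨f, hfι, ⟨fun x hx => hmaps x hx, fun x hx y hy h => hinj x hx y hy h,
    fun y' hy' => ?_⟩, fun x hx y hy => hdist x hx y hy, ?_⟩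
  · rcases hsurj y' hy' with ⟨x, hxB, hfx⟩
    exact ⟨x, hxB, hfx⟩
  · intro g hg1 hg2 hg3 x hx
    have hgP : ∀ p ∈ D, tau' (ι p) (g x) = tau p x ∧ tau' (g x) (ι p) = tau x p := by
      intro p hp
      by_cases hpB : p ∈ spacelikeBoundarySet tau
      · have hz1 : (fun w => tau' (ι p) w) = fun _ => (0 : ℝ) :=
          Continuous.ext_on hιD (cont1' (ι p)) continuous_const (by
            rintro z ⟨r, hr, rfl⟩
            show tau' (ι p) (ι r) = 0
            rw [hι p hp r hr]
            exact (hpB r).1)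
        have hz2 : (fun w => tau' w (ι p)) = fun _ => (0 : ℝ) :=
          Continuous.ext_on hιD (cont2' (ι p)) continuous_const (by
            rintro z ⟨r, hr, rfl⟩
            show tau' (ι r) (ι p) = 0
            rw [hι r hr p hp]
            exact (hpB r).2)
        constructor
        · have h0 : tau' (ι p) (g x) = 0 := congrFun hz1 (g x)
          rw [h0, (hpB x).1]
        · have h0 : tau' (g x) (ι p) = 0 := congrFun hz2 (g x)
          rw [h0, (hpB x).2]
      · have hgp : g p = ι p := hg1 p ⟨hp, hpB⟩
        constructor
        · rw [← hgp]; exact hg3 p hpB x hx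
        · rw [← hgp]; exact hg3 x hx p hpB
    exact huniq x (f x) (g x) (hfP x hx) hgP
end

section
/- Coupling characterization of isomorphy (direction ⇐): Let (M, τ, m) and (M', τ', m') be normalized bounded Lorentzian metric measure spaces, and suppose there exists a coupling π of m and m' such that for π⊗π-almost every (x, x', y, y') ∈ (M×M')² one has τ(x,y) = τ'(x',y'). Then for every k ∈ ℕ and every bounded continuous φ : ℝ^{k×k} → ℝ, ∫_{M^k} φ∘T^k dm^⊗k = ∫_{M'^k} φ∘T'^k dm'^⊗k, where T^k(x₁,…,x_k)_{ij} = τ(x_i, x_j). -/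
open MeasureTheory

/-- The defining properties of a bounded Lorentzian metric space `(M, τ)` with
respect to a fixed topology on `M`: `τ` is nonnegative, satisfies the reverse
triangle inequality, is continuous, has compact superlevel sets, and
distinguishes points. -/
structure IsBLMS {M : Type*} [TopologicalSpace M] (tau : M → M → ℝ) : Prop where
  nonneg : ∀ x y, 0 ≤ tau x y
  rev_triangle : ∀ x y z, 0 < tau x y → 0 < tau y z → tau x y + tau y z ≤ tau x z
  continuous : Continuous fun p : M × M => tau p.1 p.2
  compact_superlevel : ∀ ε : ℝ, 0 < ε → IsCompact {p : M × M | ε ≤ tau p.1 p.2}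
  point_distinction : ∀ x y : M, x ≠ y → ∃ z, tau x z ≠ tau y z ∨ tau z x ≠ tau z y

/-- A coupling of two measures: a measure on the product whose marginals are the
given measures. -/
def IsCoupling {M M' : Type*} [MeasurableSpace M] [MeasurableSpace M']
    (π : MeasureTheory.Measure (M × M')) (m : MeasureTheory.Measure M)
    (m' : MeasureTheory.Measure M') : Prop :=
  π.map Prod.fst = m ∧ π.map Prod.snd = m'

/-- Coupling characterization of isomorphy (direction ⇐): if there is a coupling
π of m and m' with τ(x,y) = τ'(x',y') for π⊗π-a.e. (x,x',y,y'), then every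
polynomial takes the same value on both normalized bounded Lorentzian metric
measure spaces. -/
theorem polynomials_eq_of_coupling
    {M M' : Type*} [TopologicalSpace M] [PolishSpace M] [MeasurableSpace M] [BorelSpace M]
    [TopologicalSpace M'] [PolishSpace M'] [MeasurableSpace M'] [BorelSpace M']
    (tau : M → M → ℝ) (tau' : M' → M' → ℝ)
    (htau : IsBLMS tau) (htau' : IsBLMS tau')
    (m : Measure M) [IsProbabilityMeasure m]
    (m' : Measure M') [IsProbabilityMeasure m']
    (π : Measure (M × M')) (hπ : IsCoupling π m m')
    (hae : ∀ᵐ q ∂(π.prod π), tau q.1.1 q.2.1 = tau' q.1.2 q.2.2)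
    (k : ℕ) (φ : (Fin k → Fin k → ℝ) → ℝ)
    (hφc : Continuous φ) (hφb : ∃ C : ℝ, ∀ a, |φ a| ≤ C) :
    ∫ x, φ (fun i j => tau (x i) (x j)) ∂(Measure.pi fun _ : Fin k => m)
      = ∫ x', φ (fun i j => tau' (x' i) (x' j)) ∂(Measure.pi fun _ : Fin k => m') := by
  classical
  obtain ⟨h1, h2⟩ := hπ
  -- τ vanishes on the diagonal
  have hdiag : ∀ x : M, tau x x = 0 := by
    intro x
    by_contra h
    have hpos : 0 < tau x x := lt_of_le_of_ne (htau.nonneg x x) (Ne.symm h)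
    have := htau.rev_triangle x x x hpos hpos
    linarith
  have hdiag' : ∀ x : M', tau' x x = 0 := by
    intro x
    by_contra h
    have hpos : 0 < tau' x x := lt_of_le_of_ne (htau'.nonneg x x) (Ne.symm h)
    have := htau'.rev_triangle x x x hpos hpos
    linarith
  -- π is a probability measure
  haveI hπprob : IsProbabilityMeasure π := by
    constructor
    have h := congrArg (fun μ : Measure M => μ Set.univ) h1
    simp only [Measure.map_apply measurable_fst MeasurableSet.univ, Set.preimage_univ] at h
    rw [h, measure_univ]
  set P : Measure (Fin k → M × M') := Measure.pi fun _ : Fin k => π with hP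
  have hfst : MeasurePreserving (fun w : Fin k → M × M' => fun i => (w i).1) P
      (Measure.pi fun _ : Fin k => m) :=
    measurePreserving_pi _ _ (fun _ => ⟨measurable_fst, h1⟩)
  have hsnd : MeasurePreserving (fun w : Fin k → M × M' => fun i => (w i).2) P
      (Measure.pi fun _ : Fin k => m') :=
    measurePreserving_pi _ _ (fun _ => ⟨measurable_snd, h2⟩)
  -- the bad set
  set B : Set ((M × M') × (M × M')) := {q | ¬ tau q.1.1 q.2.1 = tau' q.1.2 q.2.2} with hB
  have hBmeas : MeasurableSet B := by
    have hc1 : Measurable fun q : (M × M') × (M × M') => tau q.1.1 q.2.1 :=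
      (htau.continuous.comp (continuous_fst.fst.prodMk continuous_snd.fst)).measurable
    have hc2 : Measurable fun q : (M × M') × (M × M') => tau' q.1.2 q.2.2 :=
      (htau'.continuous.comp (continuous_fst.snd.prodMk continuous_snd.snd)).measurable
    exact (measurableSet_eq_fun hc1 hc2).compl
  have hBnull : (π.prod π) B = 0 := ae_iff.mp hae
  -- pushforward of P under evaluation at two distinct coordinates is π.prod π
  have hmap : ∀ i j : Fin k, i ≠ j →
      P.map (fun w => (w i, w j)) = π.prod π := by
    intro i j hij
    have hFmeas : Measurable fun w : Fin k → M × M' => (w i, w j) :=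
      (measurable_pi_apply i).prodMk (measurable_pi_apply j)
    refine (Measure.prod_eq fun s t hs ht => ?_).symm
    rw [Measure.map_apply hFmeas (hs.prod ht)]
    have hpre : (fun w : Fin k → M × M' => (w i, w j)) ⁻¹' (s ×ˢ t)
        = Set.pi Set.univ (fun l => if l = i then s else if l = j then t else Set.univ) := by
      ext w
      simp only [Set.mem_preimage, Set.mem_prod, Set.mem_pi, Set.mem_univ, true_implies]
      constructor
      · rintro ⟨hw1, hw2⟩ l
        split_ifs with hli hlj
        · subst hli; exact hw1
        · subst hlj; exact hw2
        · trivial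
      · intro h
        refine ⟨?_, ?_⟩
        · have := h i; simpa using this
        · have := h j; simpa [Ne.symm hij] using this
    rw [hpre, Measure.pi_pi]
    have hval : ∀ l : Fin k, π (if l = i then s else if l = j then t else Set.univ)
        = if l = i then π s else if l = j then π t else 1 := by
      intro l; split_ifs <;> simp
    rw [Finset.prod_congr rfl fun l _ => hval l]
    rw [← Finset.prod_subset (Finset.subset_univ ({i, j} : Finset (Fin k)))
      (fun l _ hl => by
        simp only [Finset.mem_insert, Finset.mem_singleton, not_or] at hl
        simp [hl.1, hl.2])]
    rw [Finset.prod_pair hij]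
    simp [Ne.symm hij]
  -- almost everywhere, all the matrix entries agree
  have hae' : ∀ᵐ w ∂P, ∀ i j, tau (w i).1 (w j).1 = tau' (w i).2 (w j).2 := by
    rw [ae_all_iff]
    intro i
    rw [ae_all_iff]
    intro j
    by_cases hij : i = j
    · subst hij
      filter_upwards with w
      rw [hdiag, hdiag']
    · have hFmeas : Measurable fun w : Fin k → M × M' => (w i, w j) :=
        (measurable_pi_apply i).prodMk (measurable_pi_apply j)
      rw [ae_iff]
      have hset : {w : Fin k → M × M' | ¬ tau (w i).1 (w j).1 = tau' (w i).2 (w j).2}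
          = (fun w => (w i, w j)) ⁻¹' B := rfl
      rw [hset, ← Measure.map_apply hFmeas hBmeas, hmap i j hij, hBnull]
  -- continuity of the integrands
  have hmat1 : Continuous fun x : Fin k → M => (fun i j => tau (x i) (x j) : Fin k → Fin k → ℝ) := by
    apply continuous_pi; intro i; apply continuous_pi; intro j
    have hp : Continuous fun x : Fin k → M => ((x i, x j) : M × M) :=
      (continuous_apply i).prodMk (continuous_apply j)
    exact htau.continuous.comp hp
  have hmat2 : Continuous fun x : Fin k → M' => (fun i j => tau' (x i) (x j) : Fin k → Fin k → ℝ) := by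
    apply continuous_pi; intro i; apply continuous_pi; intro j
    have hp : Continuous fun x : Fin k → M' => ((x i, x j) : M' × M') :=
      (continuous_apply i).prodMk (continuous_apply j)
    exact htau'.continuous.comp hp
  have hg1 : Continuous fun x : Fin k → M => φ (fun i j => tau (x i) (x j)) := by
    exact hφc.comp hmat1
  have hg2 : Continuous fun x : Fin k → M' => φ (fun i j => tau' (x i) (x j)) := by
    exact hφc.comp hmat2
  calc ∫ x, φ (fun i j => tau (x i) (x j)) ∂(Measure.pi fun _ : Fin k => m)
      = ∫ w, φ (fun i j => tau ((w i).1) ((w j).1)) ∂P := by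
        rw [← hfst.map_eq,
          integral_map hfst.aemeasurable hg1.aestronglyMeasurable]
    _ = ∫ w, φ (fun i j => tau' ((w i).2) ((w j).2)) ∂P := by
        refine integral_congr_ae ?_
        filter_upwards [hae'] with w hw
        congr 1
        funext i j
        exact hw i j
    _ = ∫ x', φ (fun i j => tau' (x' i) (x' j)) ∂(Measure.pi fun _ : Fin k => m') := by
        rw [← hsnd.map_eq,
          integral_map hsnd.aemeasurable hg2.aestronglyMeasurable]
end

section
/- Triangle inequality for the distortion distance: For normalized bounded Lorentzian metric measure spaces M, M', M'', LΔ₀(M, M'') ≤ LΔ₀(M, M') + LΔ₀(M', M''). -/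
open MeasureTheory

/-- The set of admissible distortion thresholds of a fixed coupling `π`:
`{ε > 0 : π⊗π(|τ(x,y) − τ'(x',y')| > ε) ≤ ε}`. -/
noncomputable def distortionThresholds {M M' : Type*} [MeasurableSpace M] [MeasurableSpace M']
    (tau : M → M → ℝ) (tau' : M' → M' → ℝ)
    (π : MeasureTheory.Measure (M × M')) : Set ℝ :=
  {ε : ℝ | 0 < ε ∧
    (π.prod π) {q : (M × M') × (M × M') |
      ε < |tau q.1.1 q.2.1 - tau' q.1.2 q.2.2|} ≤ ENNReal.ofReal ε}

/-- The (L⁰-)distortion distance `LΔ₀`: the infimum over all couplings `π` of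
`m` and `m'` of the infimum of the admissible distortion thresholds of `π`. -/
noncomputable def LDelta0 {M M' : Type*} [MeasurableSpace M] [MeasurableSpace M']
    (tau : M → M → ℝ) (tau' : M' → M' → ℝ)
    (m : MeasureTheory.Measure M) (m' : MeasureTheory.Measure M') : ℝ :=
  sInf {ε : ℝ | ∃ π : MeasureTheory.Measure (M × M'), IsCoupling π m m' ∧
    ε ∈ distortionThresholds tau tau' π}

/-! Glue couplings `π₁` of `(m, m')` and `π₂` of `(m', m'')` along their common marginal `m'`,
by disintegrating `π₂` over `M'`, into a measure `σ` on `(M × M') × M''`; its `(1, 3)`-marginal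
couples `m` and `m''`. For a pair of `σ`-samples, `|τ - τ''| > ε₁ + ε₂` forces `|τ - τ'| > ε₁` or
`|τ' - τ''| > ε₂`, so by subadditivity admissible thresholds `ε₁` of `π₁` and `ε₂` of `π₂` add up
to an admissible threshold of the glued coupling. Taking infima gives the triangle inequality. -/

open ProbabilityTheory
open scoped Pointwise

lemma MeasureTheory.Measure.exists_glue_of_snd_eq_fst {α β γ : Type*} [MeasurableSpace α]
    [MeasurableSpace β] [MeasurableSpace γ] [StandardBorelSpace γ] [Nonempty γ]
    (μ : Measure (α × β)) [SFinite μ]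
    (ν : Measure (β × γ)) [IsFiniteMeasure ν] (h : μ.snd = ν.fst) :
    ∃ σ : Measure ((α × β) × γ), σ.fst = μ ∧ σ.map (fun p => (p.1.2, p.2)) = ν := by
  refine ⟨μ ⊗ₘ Kernel.prodMkLeft α ν.condKernel, Measure.fst_compProd _ _, ?_⟩
  ext s hs
  conv_rhs => rw [← ν.disintegrate ν.condKernel, Measure.compProd_apply hs, ← h, Measure.snd,
    lintegral_map (Kernel.measurable_kernel_prodMk_left hs) measurable_snd]
  rw [Measure.map_apply (by fun_prop) hs,
    Measure.compProd_apply ((measurable_fst.snd.prodMk measurable_snd) hs)]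
  rfl

section Coupling

variable {M M' M'' : Type*} [MeasurableSpace M] [MeasurableSpace M'] [MeasurableSpace M'']
  {m : Measure M} {m' : Measure M'} {m'' : Measure M''}

lemma isCoupling_prod (m : Measure M) (m' : Measure M') [IsProbabilityMeasure m]
    [IsProbabilityMeasure m'] : IsCoupling (m.prod m') m m' :=
  ⟨Measure.fst_prod, Measure.snd_prod⟩

lemma IsCoupling.isFiniteMeasure {π : Measure (M × M')} [IsFiniteMeasure m]
    (h : IsCoupling π m m') : IsFiniteMeasure π :=
  have : IsFiniteMeasure (π.map Prod.fst) := h.1 ▸ ‹_›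
  Measure.isFiniteMeasure_of_map measurable_fst.aemeasurable

lemma IsCoupling.exists_glue [StandardBorelSpace M''] [Nonempty M''] [IsFiniteMeasure m]
    [IsFiniteMeasure m'] {π₁ : Measure (M × M')} {π₂ : Measure (M' × M'')}
    (h₁ : IsCoupling π₁ m m') (h₂ : IsCoupling π₂ m' m'') :
    ∃ σ : Measure ((M × M') × M''), σ.fst = π₁ ∧ σ.map (fun p => (p.1.2, p.2)) = π₂ :=
  have := h₁.isFiniteMeasure
  have := h₂.isFiniteMeasure
  Measure.exists_glue_of_snd_eq_fst π₁ π₂ (h₁.2.trans h₂.1.symm)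

lemma IsCoupling.map_of_fst_of_map {σ : Measure ((M × M') × M'')}
    (h₁ : IsCoupling σ.fst m m') (h₂ : IsCoupling (σ.map fun p => (p.1.2, p.2)) m' m'') :
    IsCoupling (σ.map fun p => (p.1.1, p.2)) m m'' := by
  constructor
  · rw [← h₁.1, Measure.fst, Measure.map_map measurable_fst (by fun_prop),
      Measure.map_map measurable_fst measurable_fst]
    rfl
  · rw [← h₂.2, Measure.map_map measurable_snd (by fun_prop),
      Measure.map_map measurable_snd (by fun_prop)]
    rfl

end Coupling

section Distortion

variable {M M' M'' : Type*} (tau : M → M → ℝ) (tau' : M' → M' → ℝ) (tau'' : M'' → M'' → ℝ)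

def distortionSet (ε : ℝ) : Set ((M × M') × (M × M')) :=
  {q | ε < |tau q.1.1 q.2.1 - tau' q.1.2 q.2.2|}

lemma distortionSet_add_subset (ε₁ ε₂ : ℝ) :
    Prod.map (fun p : (M × M') × M'' => (p.1.1, p.2)) (fun p => (p.1.1, p.2)) ⁻¹'
        distortionSet tau tau'' (ε₁ + ε₂) ⊆
      Prod.map Prod.fst Prod.fst ⁻¹' distortionSet tau tau' ε₁ ∪
        Prod.map (fun p : (M × M') × M'' => (p.1.2, p.2)) (fun p => (p.1.2, p.2)) ⁻¹'
          distortionSet tau' tau'' ε₂ := by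
  rintro ⟨⟨⟨x, x'⟩, x''⟩, ⟨⟨y, y'⟩, y''⟩⟩ hq
  simp only [distortionSet, Set.mem_union, Set.mem_preimage, Set.mem_ofPred_eq, Prod.map] at hq ⊢
  by_contra! hc
  exact hq.not_ge ((abs_sub_le _ (tau' x' y') _).trans (add_le_add hc.1 hc.2))

variable [MeasurableSpace M] [MeasurableSpace M'] [MeasurableSpace M'']

lemma mem_distortionThresholds {π : Measure (M × M')} {ε : ℝ} :
    ε ∈ distortionThresholds tau tau' π ↔
      0 < ε ∧ π.prod π (distortionSet tau tau' ε) ≤ ENNReal.ofReal ε :=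
  Iff.rfl

variable {tau tau'} in
lemma measurableSet_distortionSet (ht : Measurable fun p : M × M => tau p.1 p.2)
    (ht' : Measurable fun p : M' × M' => tau' p.1 p.2) (ε : ℝ) :
    MeasurableSet (distortionSet tau tau' ε) :=
  have hτ : Measurable fun q : (M × M') × (M × M') => tau q.1.1 q.2.1 :=
    ht.comp (f := fun q : (M × M') × (M × M') => (q.1.1, q.2.1)) (by fun_prop)
  have hτ' : Measurable fun q : (M × M') × (M × M') => tau' q.1.2 q.2.2 :=
    ht'.comp (f := fun q : (M × M') × (M × M') => (q.1.2, q.2.2)) (by fun_prop)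
  measurableSet_lt measurable_const (hτ.sub hτ').abs

variable {tau tau' tau''} in
lemma add_mem_distortionThresholds_map (ht : Measurable fun p : M × M => tau p.1 p.2)
    (ht'' : Measurable fun p : M'' × M'' => tau'' p.1 p.2)
    (σ : Measure ((M × M') × M'')) [SFinite σ] {ε₁ ε₂ : ℝ}
    (h₁ : ε₁ ∈ distortionThresholds tau tau' σ.fst)
    (h₂ : ε₂ ∈ distortionThresholds tau' tau'' (σ.map fun p => (p.1.2, p.2))) :
    ε₁ + ε₂ ∈ distortionThresholds tau tau'' (σ.map fun p => (p.1.1, p.2)) := by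
  set p₁₃ : (M × M') × M'' → M × M'' := fun p => (p.1.1, p.2)
  set p₂₃ : (M × M') × M'' → M' × M'' := fun p => (p.1.2, p.2)
  have hp₁₃ : Measurable p₁₃ := by fun_prop
  have hp₂₃ : Measurable p₂₃ := by fun_prop
  rw [mem_distortionThresholds] at h₁ h₂ ⊢
  refine ⟨add_pos h₁.1 h₂.1, ?_⟩
  calc (σ.map p₁₃).prod (σ.map p₁₃) (distortionSet tau tau'' (ε₁ + ε₂))
      = σ.prod σ (Prod.map p₁₃ p₁₃ ⁻¹' distortionSet tau tau'' (ε₁ + ε₂)) := by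
        rw [Measure.map_prod_map _ _ hp₁₃ hp₁₃, Measure.map_apply (hp₁₃.prodMap hp₁₃)
          (measurableSet_distortionSet ht ht'' _)]
    _ ≤ σ.prod σ (Prod.map Prod.fst Prod.fst ⁻¹' distortionSet tau tau' ε₁) +
        σ.prod σ (Prod.map p₂₃ p₂₃ ⁻¹' distortionSet tau' tau'' ε₂) :=
        (measure_mono (distortionSet_add_subset tau tau' tau'' ε₁ ε₂)).trans
          (measure_union_le _ _)
    _ ≤ σ.fst.prod σ.fst (distortionSet tau tau' ε₁) +
        (σ.map p₂₃).prod (σ.map p₂₃) (distortionSet tau' tau'' ε₂) := by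
        rw [Measure.fst, Measure.map_prod_map _ _ measurable_fst measurable_fst,
          Measure.map_prod_map _ _ hp₂₃ hp₂₃]
        gcongr <;> exact Measure.le_map_apply (by fun_prop) _
    _ ≤ ENNReal.ofReal ε₁ + ENNReal.ofReal ε₂ := add_le_add h₁.2 h₂.2
    _ = ENNReal.ofReal (ε₁ + ε₂) := (ENNReal.ofReal_add h₁.1.le h₂.1.le).symm

end Distortion

section Admissible

variable {M M' M'' : Type*} [MeasurableSpace M] [MeasurableSpace M'] [MeasurableSpace M'']
  (tau : M → M → ℝ) (tau' : M' → M' → ℝ) (tau'' : M'' → M'' → ℝ)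
  (m : Measure M) (m' : Measure M') (m'' : Measure M'')

def admissibleDistortions : Set ℝ :=
  {ε : ℝ | ∃ π : Measure (M × M'), IsCoupling π m m' ∧ ε ∈ distortionThresholds tau tau' π}

lemma LDelta0_eq_sInf_admissibleDistortions :
    LDelta0 tau tau' m m' = sInf (admissibleDistortions tau tau' m m') :=
  rfl

lemma bddBelow_admissibleDistortions : BddBelow (admissibleDistortions tau tau' m m') :=
  ⟨0, fun _ ⟨_, _, hε, _⟩ => hε.le⟩

lemma one_mem_admissibleDistortions [IsProbabilityMeasure m] [IsProbabilityMeasure m'] :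
    1 ∈ admissibleDistortions tau tau' m m' :=
  ⟨m.prod m', isCoupling_prod m m', one_pos, ENNReal.ofReal_one ▸ prob_le_one⟩

variable {tau tau'' m m''} in
lemma add_subset_admissibleDistortions [StandardBorelSpace M''] [Nonempty M'']
    [IsFiniteMeasure m] [IsFiniteMeasure m'] (ht : Measurable fun p : M × M => tau p.1 p.2)
    (ht'' : Measurable fun p : M'' × M'' => tau'' p.1 p.2) :
    admissibleDistortions tau tau' m m' + admissibleDistortions tau' tau'' m' m'' ⊆
      admissibleDistortions tau tau'' m m'' := by
  rintro _ ⟨ε₁, ⟨π₁, hπ₁, hε₁⟩, ε₂, ⟨π₂, hπ₂, hε₂⟩, rfl⟩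
  obtain ⟨σ, rfl, rfl⟩ := hπ₁.exists_glue hπ₂
  have : IsFiniteMeasure (σ.map Prod.fst) := hπ₁.isFiniteMeasure
  have : IsFiniteMeasure σ := Measure.isFiniteMeasure_of_map measurable_fst.aemeasurable
  exact ⟨_, hπ₁.map_of_fst_of_map hπ₂, add_mem_distortionThresholds_map ht ht'' σ hε₁ hε₂⟩

end Admissible

theorem LDelta0_triangle_general
    {M M' M'' : Type*}
    [TopologicalSpace M] [PolishSpace M] [MeasurableSpace M] [BorelSpace M]
    [MeasurableSpace M']
    [TopologicalSpace M''] [PolishSpace M''] [MeasurableSpace M''] [BorelSpace M'']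
    (tau : M → M → ℝ) (tau' : M' → M' → ℝ) (tau'' : M'' → M'' → ℝ)
    (htau : IsBLMS tau) (htau'' : IsBLMS tau'')
    (m : Measure M) [IsProbabilityMeasure m]
    (m' : Measure M') [IsProbabilityMeasure m']
    (m'' : Measure M'') [IsProbabilityMeasure m''] :
    LDelta0 tau tau'' m m'' ≤ LDelta0 tau tau' m m' + LDelta0 tau' tau'' m' m'' := by
  have := nonempty_of_isProbabilityMeasure m''
  have hA := one_mem_admissibleDistortions tau tau' m m'
  have hB := one_mem_admissibleDistortions tau' tau'' m' m''
  simp only [LDelta0_eq_sInf_admissibleDistortions]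
  calc sInf (admissibleDistortions tau tau'' m m'')
      ≤ sInf (admissibleDistortions tau tau' m m' + admissibleDistortions tau' tau'' m' m'') :=
        csInf_le_csInf (bddBelow_admissibleDistortions ..) ⟨_, Set.add_mem_add hA hB⟩
          (add_subset_admissibleDistortions tau' m' htau.continuous.measurable
            htau''.continuous.measurable)
    _ = sInf (admissibleDistortions tau tau' m m') +
          sInf (admissibleDistortions tau' tau'' m' m'') :=
        csInf_add ⟨_, hA⟩ (bddBelow_admissibleDistortions ..) ⟨_, hB⟩
          (bddBelow_admissibleDistortions ..)

/-- Triangle inequality for the distortion distance: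
LΔ₀(M, M'') ≤ LΔ₀(M, M') + LΔ₀(M', M''). -/
theorem LDelta0_triangle
    {M M' M'' : Type*}
    [TopologicalSpace M] [PolishSpace M] [MeasurableSpace M] [BorelSpace M]
    [TopologicalSpace M'] [PolishSpace M'] [MeasurableSpace M'] [BorelSpace M']
    [TopologicalSpace M''] [PolishSpace M''] [MeasurableSpace M''] [BorelSpace M'']
    (tau : M → M → ℝ) (tau' : M' → M' → ℝ) (tau'' : M'' → M'' → ℝ)
    (htau : IsBLMS tau) (htau' : IsBLMS tau') (htau'' : IsBLMS tau'')
    (m : Measure M) [IsProbabilityMeasure m]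
    (m' : Measure M') [IsProbabilityMeasure m']
    (m'' : Measure M'') [IsProbabilityMeasure m''] :
    LDelta0 tau tau'' m m'' ≤ LDelta0 tau tau' m m' + LDelta0 tau' tau'' m' m'' :=
  LDelta0_triangle_general tau tau' tau'' htau htau'' m m' m''
end

section
/- Invariance of diameter under distortion-zero coupling: Let (M, τ, m) and (M', τ', m') be normalized bounded Lorentzian metric measure spaces and π a coupling of m and m' with τ(x,y) = τ'(x',y') for π⊗π-a.e. (x,x',y,y'). If sup{τ(x,y) : x,y ∈ supp m} ≤ L, then sup{τ'(x',y') : x',y' ∈ supp m'} ≤ L. -/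
open MeasureTheory

/-- The support of a Borel measure: points all of whose open neighborhoods have
positive measure. -/
def mSupport {M : Type*} [TopologicalSpace M] [MeasurableSpace M]
    (m : MeasureTheory.Measure M) : Set M :=
  {x | ∀ U : Set M, IsOpen U → x ∈ U → 0 < m U}


lemma compl_mSupport_null {M : Type*} [TopologicalSpace M] [MeasurableSpace M]
    [SecondCountableTopology M]
    (m : MeasureTheory.Measure M) :
    m ({x | ∀ U : Set M, IsOpen U → x ∈ U → 0 < m U} : Set M)ᶜ = 0 := by
  set S : Set (Set M) := {U | IsOpen U ∧ m U = 0} with hS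
  obtain ⟨T, hTc, hTS, hTU⟩ := TopologicalSpace.isOpen_sUnion_countable S (fun U hU => hU.1)
  have hsub : ({x | ∀ U : Set M, IsOpen U → x ∈ U → 0 < m U} : Set M)ᶜ ⊆ ⋃₀ T := by
    intro x hx
    simp only [Set.mem_compl_iff, Set.mem_setOf_eq, not_forall] at hx
    obtain ⟨U, hUo, hxU, hpos⟩ := hx
    have : m U = 0 := by simpa using (le_of_not_gt hpos)
    rw [hTU]
    exact ⟨U, ⟨hUo, this⟩, hxU⟩
  refine measure_mono_null hsub ?_
  exact (measure_sUnion_null_iff hTc).2 fun U hU => (hTS hU).2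

/-- Invariance of the diameter under a distortion-zero coupling: if π couples m
and m' with τ(x,y) = τ'(x',y') for π⊗π-a.e. (x,x',y,y'), and τ ≤ L on
supp m × supp m, then τ' ≤ L on supp m' × supp m'. -/
theorem diam_le_of_coupling
    {M M' : Type*} [TopologicalSpace M] [PolishSpace M] [MeasurableSpace M] [BorelSpace M]
    [TopologicalSpace M'] [PolishSpace M'] [MeasurableSpace M'] [BorelSpace M']
    (tau : M → M → ℝ) (tau' : M' → M' → ℝ)
    (htau : IsBLMS tau) (htau' : IsBLMS tau')
    (m : Measure M) [IsProbabilityMeasure m]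
    (m' : Measure M') [IsProbabilityMeasure m']
    (π : Measure (M × M')) (hπ : IsCoupling π m m')
    (hae : ∀ᵐ q ∂(π.prod π), tau q.1.1 q.2.1 = tau' q.1.2 q.2.2)
    (L : ℝ) (hL : ∀ x ∈ mSupport m, ∀ y ∈ mSupport m, tau x y ≤ L) :
    ∀ x' ∈ mSupport m', ∀ y' ∈ mSupport m', tau' x' y' ≤ L := by
  obtain ⟨hfst, hsnd⟩ := hπ
  have hπprob : IsProbabilityMeasure π := by
    constructor
    have h1 : π Set.univ = m Set.univ := by
      rw [← hfst, Measure.map_apply measurable_fst MeasurableSet.univ, Set.preimage_univ]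
    rw [h1, measure_univ]
  intro x' hx' y' hy'
  by_contra hgt
  push_neg at hgt
  -- open neighborhoods where tau' > L
  have hW : IsOpen {p : M' × M' | L < tau' p.1 p.2} :=
    isOpen_lt continuous_const htau'.continuous
  obtain ⟨U', V', hU'o, hV'o, hxU', hyV', hUV⟩ :=
    isOpen_prod_iff.1 hW x' y' hgt
  have hmU' : 0 < m' U' := hx' U' hU'o hxU'
  have hmV' : 0 < m' V' := hy' V' hV'o hyV'
  -- sets in M × M'
  have hπU : π (Prod.snd ⁻¹' U') = m' U' := by
    rw [← hsnd, Measure.map_apply measurable_snd hU'o.measurableSet]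
  have hπV : π (Prod.snd ⁻¹' V') = m' V' := by
    rw [← hsnd, Measure.map_apply measurable_snd hV'o.measurableSet]
  -- the bad set where first coordinate not in support
  have hbad : π (Prod.fst ⁻¹' (mSupport m)ᶜ) = 0 := by
    rw [← Measure.map_apply measurable_fst, hfst]
    · exact compl_mSupport_null m
    · have : IsClosed (mSupport m) := by
        rw [← isOpen_compl_iff]
        rw [isOpen_iff_mem_nhds]
        intro x hx
        simp only [mSupport, Set.mem_compl_iff, Set.mem_setOf_eq, not_forall] at hx
        obtain ⟨U, hUo, hxU, hpos⟩ := hx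
        filter_upwards [hUo.mem_nhds hxU] with y hy
        simp only [mSupport, Set.mem_compl_iff, Set.mem_setOf_eq, not_forall]
        exact ⟨U, hUo, hy, hpos⟩
      exact this.measurableSet.compl
  -- positive measure set in the product
  set G : Set ((M × M') × (M × M')) :=
    (Prod.snd ⁻¹' U') ×ˢ (Prod.snd ⁻¹' V') with hG
  have hGmeas : (π.prod π) G = π (Prod.snd ⁻¹' U') * π (Prod.snd ⁻¹' V') :=
    Measure.prod_prod _ _
  have hGpos : 0 < (π.prod π) G := by
    rw [hGmeas, hπU, hπV]
    exact ENNReal.mul_pos hmU'.ne' hmV'.ne'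
  -- null sets
  have hN1 : (π.prod π) {q : (M × M') × (M × M') | q.1.1 ∉ mSupport m} = 0 := by
    have : {q : (M × M') × (M × M') | q.1.1 ∉ mSupport m}
        = (Prod.fst ⁻¹' (mSupport m)ᶜ) ×ˢ Set.univ := by
      ext q; simp [Set.mem_prod]
    rw [this, Measure.prod_prod, hbad, zero_mul]
  have hN2 : (π.prod π) {q : (M × M') × (M × M') | q.2.1 ∉ mSupport m} = 0 := by
    have : {q : (M × M') × (M × M') | q.2.1 ∉ mSupport m}
        = Set.univ ×ˢ (Prod.fst ⁻¹' (mSupport m)ᶜ) := by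
      ext q; simp [Set.mem_prod]
    rw [this, Measure.prod_prod, hbad, mul_zero]
  -- get a good point
  have hae' : ∀ᵐ q ∂(π.prod π),
      tau q.1.1 q.2.1 = tau' q.1.2 q.2.2 ∧ q.1.1 ∈ mSupport m ∧ q.2.1 ∈ mSupport m := by
    filter_upwards [hae, (ae_iff).2 hN1, (ae_iff).2 hN2] with q h1 h2 h3
    exact ⟨h1, h2, h3⟩
  obtain ⟨q, hqG, hq⟩ : ∃ q, q ∈ G ∧ tau q.1.1 q.2.1 = tau' q.1.2 q.2.2
      ∧ q.1.1 ∈ mSupport m ∧ q.2.1 ∈ mSupport m := by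
    by_contra hno
    have hsub : G ⊆ {q : (M × M') × (M × M') | ¬(tau q.1.1 q.2.1 = tau' q.1.2 q.2.2
        ∧ q.1.1 ∈ mSupport m ∧ q.2.1 ∈ mSupport m)} :=
      fun q hqG hq => hno ⟨q, hqG, hq⟩
    have hnull : (π.prod π) G = 0 :=
      measure_mono_null hsub ((ae_iff).1 hae')
    exact hGpos.ne' hnull
  obtain ⟨heq, hs1, hs2⟩ := hq
  have hmem : (q.1.2, q.2.2) ∈ U' ×ˢ V' := ⟨hqG.1, hqG.2⟩
  have : L < tau' q.1.2 q.2.2 := hUV hmem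
  rw [← heq] at this
  exact absurd (hL _ hs1 _ hs2) (not_le.2 this)
end
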